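/- arXiv:1009.5162 — 6 statements merged into one kernel-verified Lean document; each statement's English description precedes it below -/
import Mathlib

section
/- If G is a simple connected graph with n vertices and diameter 2, then the rubbling number of G, regarded as a real number, satisfies ρ(G) ≤ √(2n − 1) + 5. -/
open Finset

variable {V : Type*}

/-- A pebbling move: remove two pebbles at a vertex `v` and add one pebble at an
adjacent vertex `u`. -/
def IsPebblingMove (G : SimpleGraph V) (p p' : V → ℕ) : Prop :=
  ∃ v u, G.Adj v u ∧ 2 ≤ p v ∧
    p' v = p v - 2 ∧ p' u = p u + 1 ∧ ∀ z, z ≠ v → z ≠ u → p' z = p z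

/-- A strict rubbling move: remove one pebble each at distinct vertices `v` and `w`,
both adjacent to `u`, and add one pebble at `u`. -/
def IsStrictRubblingMove (G : SimpleGraph V) (p p' : V → ℕ) : Prop :=
  ∃ v w u, v ≠ w ∧ G.Adj v u ∧ G.Adj w u ∧ 1 ≤ p v ∧ 1 ≤ p w ∧
    p' v = p v - 1 ∧ p' w = p w - 1 ∧ p' u = p u + 1 ∧
    ∀ z, z ≠ v → z ≠ w → z ≠ u → p' z = p z

/-- A rubbling move is a pebbling move or a strict rubbling move. -/
def IsRubblingMove (G : SimpleGraph V) (p p' : V → ℕ) : Prop :=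
  IsPebblingMove G p p' ∨ IsStrictRubblingMove G p p'

/-- A vertex `x` is reachable from the pebble distribution `p` if some executable
sequence of rubbling moves leads to a distribution with a pebble on `x`. -/
def RubblingReachable (G : SimpleGraph V) (p : V → ℕ) (x : V) : Prop :=
  ∃ q : V → ℕ, Relation.ReflTransGen (IsRubblingMove G) p q ∧ 1 ≤ q x

/-- The rubbling number: the least `m` such that every vertex is reachable from
every pebble distribution of size `m`. -/
noncomputable def rubblingNumber (G : SimpleGraph V) [Fintype V] : ℕ :=
  sInf {m | ∀ p : V → ℕ, ∑ v, p v = m → ∀ x, RubblingReachable G p x}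

/-- The optimal rubbling number: the least size of a pebble distribution from which
every vertex is reachable. -/
noncomputable def optimalRubblingNumber (G : SimpleGraph V) [Fintype V] : ℕ :=
  sInf {m | ∃ p : V → ℕ, ∑ v, p v = m ∧ ∀ x, RubblingReachable G p x}


/-- Auxiliary: a vertex adjacent to `x` can receive a pebble; `NProd G x r` says that from
the distribution `r` some sequence of rubbling moves puts a pebble on a neighbor of `x`. -/
def NProd (G : SimpleGraph V) (x : V) (r : V → ℕ) : Prop :=
  ∃ q y, Relation.ReflTransGen (IsRubblingMove G) r q ∧ G.Adj x y ∧ 1 ≤ q y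

section
variable {V : Type*} [DecidableEq V] {G : SimpleGraph V}

def afterPeb (p : V → ℕ) (v u : V) : V → ℕ :=
  fun z => if z = v then p v - 2 else if z = u then p u + 1 else p z

def afterStrict (p : V → ℕ) (v w u : V) : V → ℕ :=
  fun z => if z = v then p v - 1 else if z = w then p w - 1 else if z = u then p u + 1 else p z

lemma isPeb (p : V → ℕ) {v u : V} (h : G.Adj v u) (h2 : 2 ≤ p v) :
    IsRubblingMove G p (afterPeb p v u) := by
  have hvu : v ≠ u := h.ne
  refine Or.inl ⟨v, u, h, h2, ?_, ?_, ?_⟩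
  · simp [afterPeb]
  · simp [afterPeb, Ne.symm hvu]
  · intro z hzv hzu; simp [afterPeb, hzv, hzu]

lemma afterPeb_u (p : V → ℕ) {v u : V} (h : v ≠ u) : afterPeb p v u u = p u + 1 := by
  simp [afterPeb, Ne.symm h]

lemma afterStrict_u (p : V → ℕ) {v w u : V} (hv : v ≠ u) (hw : w ≠ u) :
    afterStrict p v w u u = p u + 1 := by
  simp [afterStrict, Ne.symm hv, Ne.symm hw]

lemma afterStrict_other (p : V → ℕ) {v w u z : V} (hv : z ≠ v) (hw : z ≠ w) (hu : z ≠ u) :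
    afterStrict p v w u z = p z := by
  simp [afterStrict, hv, hw, hu]

end

section
variable {V : Type*} [DecidableEq V] {G : SimpleGraph V}

lemma isStrict (p : V → ℕ) {v w u : V} (hvw : v ≠ w) (hv : G.Adj v u) (hw : G.Adj w u)
    (h1 : 1 ≤ p v) (h2 : 1 ≤ p w) :
    IsRubblingMove G p (afterStrict p v w u) := by
  have hvu : v ≠ u := hv.ne
  have hwu : w ≠ u := hw.ne
  refine Or.inr ⟨v, w, u, hvw, hv, hw, h1, h2, ?_, ?_, ?_, ?_⟩
  · simp [afterStrict]
  · simp [afterStrict, Ne.symm hvw]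
  · simp [afterStrict, Ne.symm hvu, Ne.symm hwu]
  · intro z h1 h2 h3; simp [afterStrict, h1, h2, h3]

lemma move_add {p q : V → ℕ} (h : IsRubblingMove G p q) (r : V → ℕ) :
    IsRubblingMove G (p + r) (q + r) := by
  rcases h with ⟨v, u, hadj, h2, hv, hu, ho⟩ | ⟨v, w, u, hvw, hv, hw, h1, h2, hv', hw', hu', ho⟩
  · refine Or.inl ⟨v, u, hadj, by simpa using le_add_right h2, ?_, ?_, ?_⟩
    · simp only [Pi.add_apply, hv]; omega
    · simp only [Pi.add_apply, hu]; omega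
    · intro z hz1 hz2; simp only [Pi.add_apply, ho z hz1 hz2]
  · refine Or.inr ⟨v, w, u, hvw, hv, hw, by simpa using le_add_right h1,
      by simpa using le_add_right h2, ?_, ?_, ?_, ?_⟩
    · simp only [Pi.add_apply, hv']; omega
    · simp only [Pi.add_apply, hw']; omega
    · simp only [Pi.add_apply, hu']; omega
    · intro z hz1 hz2 hz3; simp only [Pi.add_apply, ho z hz1 hz2 hz3]

lemma play_add {p q : V → ℕ} (h : Relation.ReflTransGen (IsRubblingMove G) p q) (r : V → ℕ) :
    Relation.ReflTransGen (IsRubblingMove G) (p + r) (q + r) := by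
  induction h with
  | refl => exact Relation.ReflTransGen.refl
  | tail _ hstep ih => exact ih.tail (move_add hstep r)

/-- If two sub-distributions each can place a pebble on a neighbour of `x`, and together they
fit under `p`, then `x` is reachable from `p`. -/
lemma two_prod {p r₁ r₂ : V → ℕ} {x : V} (hle : ∀ v, r₁ v + r₂ v ≤ p v)
    (h1 : NProd G x r₁) (h2 : NProd G x r₂) : RubblingReachable G p x := by
  obtain ⟨q₁, y₁, hp1, hy1, hq1⟩ := h1
  obtain ⟨q₂, y₂, hp2, hy2, hq2⟩ := h2
  set rest : V → ℕ := fun v => p v - (r₁ v + r₂ v) with hrest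
  have hpeq : p = r₁ + (r₂ + rest) := by
    funext v; simp only [Pi.add_apply, hrest]; have := hle v; omega
  have play1 : Relation.ReflTransGen (IsRubblingMove G) p (q₁ + (r₂ + rest)) := by
    rw [hpeq]; exact play_add hp1 _
  have play2 : Relation.ReflTransGen (IsRubblingMove G) (q₁ + (r₂ + rest)) (q₂ + (q₁ + rest)) := by
    have : q₁ + (r₂ + rest) = r₂ + (q₁ + rest) := by funext v; simp [Pi.add_apply]; ring
    rw [this]
    exact play_add hp2 _
  have play12 := play1.trans play2
  set c : V → ℕ := q₂ + (q₁ + rest) with hc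
  by_cases hyy : y₁ = y₂
  · -- two pebbles on the same neighbour y₂
    have hc2 : 2 ≤ c y₂ := by
      simp only [hc, Pi.add_apply]
      subst hyy
      omega
    refine ⟨afterPeb c y₂ x, play12.tail (isPeb c hy2.symm hc2), ?_⟩
    rw [afterPeb_u c (hy2.symm.ne)]
    omega
  · have hc1 : 1 ≤ c y₁ := by simp only [hc, Pi.add_apply]; omega
    have hc2' : 1 ≤ c y₂ := by simp only [hc, Pi.add_apply]; omega
    refine ⟨afterStrict c y₁ y₂ x, play12.tail (isStrict c hyy hy1.symm hy2.symm hc1 hc2'), ?_⟩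
    rw [afterStrict_u c (hy1.symm.ne) (hy2.symm.ne)]
    omega

end
section
variable {V : Type*} [DecidableEq V] {G : SimpleGraph V}

lemma g_onN {x y : V} {r : V → ℕ} (hy : G.Adj x y) (h : 1 ≤ r y) : NProd G x r :=
  ⟨r, y, Relation.ReflTransGen.refl, hy, h⟩

lemma g_heavy {x y f : V} {r : V → ℕ} (hfy : G.Adj f y) (hxy : G.Adj x y)
    (h2 : 2 ≤ r f) : NProd G x r := by
  refine ⟨afterPeb r f y, y, Relation.ReflTransGen.refl.tail (isPeb r hfy h2), hxy, ?_⟩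
  rw [afterPeb_u r hfy.ne]; omega

lemma g_goodpair {x y a b : V} {r : V → ℕ} (hab : a ≠ b) (ha : G.Adj a y) (hb : G.Adj b y)
    (hxy : G.Adj x y) (h1 : 1 ≤ r a) (h2 : 1 ≤ r b) : NProd G x r := by
  refine ⟨afterStrict r a b y, y, Relation.ReflTransGen.refl.tail (isStrict r hab ha hb h1 h2),
    hxy, ?_⟩
  rw [afterStrict_u r ha.ne hb.ne]; omega

lemma g_cherry {x y a b z : V} {r : V → ℕ} (hab : a ≠ b) (ha : G.Adj a z) (hb : G.Adj b z)
    (hzy : G.Adj z y) (hxy : G.Adj x y) (h1 : 1 ≤ r a) (h2 : 1 ≤ r b) (h3 : 1 ≤ r z) :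
    NProd G x r := by
  set r1 := afterStrict r a b z with hr1
  have step1 : IsRubblingMove G r r1 := isStrict r hab ha hb h1 h2
  have hz2 : 2 ≤ r1 z := by rw [hr1, afterStrict_u r ha.ne hb.ne]; omega
  refine ⟨afterPeb r1 z y, y,
    (Relation.ReflTransGen.refl.tail step1).tail (isPeb r1 hzy hz2), hxy, ?_⟩
  rw [afterPeb_u r1 hzy.ne]; omega

/-- pair `(a,b)` moves onto `q`, then `q` together with `c` moves onto `y ∈ N(x)`. -/
lemma g_pairplus {x y a b c q : V} {r : V → ℕ} (hab : a ≠ b) (ha : G.Adj a q) (hb : G.Adj b q)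
    (hca : c ≠ a) (hcb : c ≠ b) (hcq : c ≠ q) (hqy : G.Adj q y) (hcy : G.Adj c y)
    (hxy : G.Adj x y) (h1 : 1 ≤ r a) (h2 : 1 ≤ r b) (h3 : 1 ≤ r c) : NProd G x r := by
  set r1 := afterStrict r a b q with hr1
  have step1 : IsRubblingMove G r r1 := isStrict r hab ha hb h1 h2
  have hq1 : 1 ≤ r1 q := by rw [hr1, afterStrict_u r ha.ne hb.ne]; omega
  have hc1 : 1 ≤ r1 c := by rw [hr1, afterStrict_other r hca hcb hcq]; omega
  have hqc : q ≠ c := Ne.symm hcq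
  refine ⟨afterStrict r1 q c y, y,
    (Relation.ReflTransGen.refl.tail step1).tail (isStrict r1 hqc hqy hcy hq1 hc1), hxy, ?_⟩
  rw [afterStrict_u r1 hqy.ne hcy.ne]; omega

lemma g_collision {x y a b c d q : V} {r : V → ℕ} (hab : a ≠ b) (hcd : c ≠ d)
    (hca : c ≠ a) (hcb : c ≠ b) (hda : d ≠ a) (hdb : d ≠ b)
    (ha : G.Adj a q) (hb : G.Adj b q) (hc : G.Adj c q) (hd : G.Adj d q)
    (hqy : G.Adj q y) (hxy : G.Adj x y)
    (h1 : 1 ≤ r a) (h2 : 1 ≤ r b) (h3 : 1 ≤ r c) (h4 : 1 ≤ r d) : NProd G x r := by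
  set r1 := afterStrict r a b q with hr1
  have step1 : IsRubblingMove G r r1 := isStrict r hab ha hb h1 h2
  have h3' : 1 ≤ r1 c := by rw [hr1, afterStrict_other r hca hcb hc.ne]; omega
  have h4' : 1 ≤ r1 d := by rw [hr1, afterStrict_other r hda hdb hd.ne]; omega
  set r2 := afterStrict r1 c d q with hr2
  have step2 : IsRubblingMove G r1 r2 := isStrict r1 hcd hc hd h3' h4'
  have hq2 : 2 ≤ r2 q := by
    rw [hr2, afterStrict_u r1 hc.ne hd.ne, hr1, afterStrict_u r ha.ne hb.ne]; omega
  refine ⟨afterPeb r2 q y, y,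
    ((Relation.ReflTransGen.refl.tail step1).tail step2).tail (isPeb r2 hqy hq2), hxy, ?_⟩
  rw [afterPeb_u r2 hqy.ne]; omega

/-- pair `(a,b)` moves onto `q`; `q` and `w` move onto the pebbled vertex `v`, which then
has two pebbles and sends one to `y ∈ N(x)`. -/
lemma g_matched {x y a b w v q : V} {r : V → ℕ} (hab : a ≠ b)
    (ha : G.Adj a q) (hb : G.Adj b q) (hwa : w ≠ a) (hwb : w ≠ b) (hwq : w ≠ q)
    (hva : v ≠ a) (hvb : v ≠ b)
    (hqv : G.Adj q v) (hwv : G.Adj w v) (hvy : G.Adj v y) (hxy : G.Adj x y)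
    (h1 : 1 ≤ r a) (h2 : 1 ≤ r b) (h3 : 1 ≤ r w) (h4 : 1 ≤ r v) : NProd G x r := by
  set r1 := afterStrict r a b q with hr1
  have step1 : IsRubblingMove G r r1 := isStrict r hab ha hb h1 h2
  have hq1 : 1 ≤ r1 q := by rw [hr1, afterStrict_u r ha.ne hb.ne]; omega
  have hw1 : 1 ≤ r1 w := by rw [hr1, afterStrict_other r hwa hwb hwq]; omega
  set r2 := afterStrict r1 q w v with hr2
  have hqw : q ≠ w := Ne.symm hwq
  have step2 : IsRubblingMove G r1 r2 := isStrict r1 hqw hqv hwv hq1 hw1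
  have hv2 : 2 ≤ r2 v := by
    rw [hr2, afterStrict_u r1 hqv.ne hwv.ne, hr1,
      afterStrict_other r hva hvb (Ne.symm hqv.ne)]
    omega
  refine ⟨afterPeb r2 v y, y,
    ((Relation.ReflTransGen.refl.tail step1).tail step2).tail (isPeb r2 hvy hv2), hxy, ?_⟩
  rw [afterPeb_u r2 hvy.ne]; omega

/-- pairs `(a,b) → q`, `(c,d) → q'`, then `q,q'` move onto the pebbled vertex `e`,
which sends a pebble to `y ∈ N(x)`. -/
lemma g_share1 {x y a b c d e q q' : V} {r : V → ℕ} (hab : a ≠ b) (hcd : c ≠ d)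
    (hca : c ≠ a) (hcb : c ≠ b) (hda : d ≠ a) (hdb : d ≠ b)
    (hcq : c ≠ q) (hdq : d ≠ q) (hqq' : q ≠ q')
    (hea : e ≠ a) (heb : e ≠ b) (hec : e ≠ c) (hed : e ≠ d)
    (ha : G.Adj a q) (hb : G.Adj b q) (hc : G.Adj c q') (hd : G.Adj d q')
    (hqe : G.Adj q e) (hq'e : G.Adj q' e) (hey : G.Adj e y) (hxy : G.Adj x y)
    (h1 : 1 ≤ r a) (h2 : 1 ≤ r b) (h3 : 1 ≤ r c) (h4 : 1 ≤ r d) (h5 : 1 ≤ r e) :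
    NProd G x r := by
  set r1 := afterStrict r a b q with hr1
  have step1 : IsRubblingMove G r r1 := isStrict r hab ha hb h1 h2
  have h3' : 1 ≤ r1 c := by rw [hr1, afterStrict_other r hca hcb hcq]; omega
  have h4' : 1 ≤ r1 d := by rw [hr1, afterStrict_other r hda hdb hdq]; omega
  set r2 := afterStrict r1 c d q' with hr2
  have step2 : IsRubblingMove G r1 r2 := isStrict r1 hcd hc hd h3' h4'
  have hq1 : 1 ≤ r2 q := by
    rw [hr2, afterStrict_other r1 (Ne.symm hcq) (Ne.symm hdq) hqq', hr1,
      afterStrict_u r ha.ne hb.ne]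
    omega
  have hq'1 : 1 ≤ r2 q' := by
    rw [hr2, afterStrict_u r1 hc.ne hd.ne]; omega
  set r3 := afterStrict r2 q q' e with hr3
  have step3 : IsRubblingMove G r2 r3 := isStrict r2 hqq' hqe hq'e hq1 hq'1
  have he2 : 2 ≤ r3 e := by
    rw [hr3, afterStrict_u r2 hqe.ne hq'e.ne, hr2,
      afterStrict_other r1 hec hed (Ne.symm hq'e.ne), hr1,
      afterStrict_other r hea heb (Ne.symm hqe.ne)]
    omega
  refine ⟨afterPeb r3 e y, y,
    (((Relation.ReflTransGen.refl.tail step1).tail step2).tail step3).tail (isPeb r3 hey he2),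
    hxy, ?_⟩
  rw [afterPeb_u r3 hey.ne]; omega

/-- pairs `(a,b) → q`, `(c,d) → q'`, then `q,q'` put a pebble on `y ∈ N(x)`. -/
lemma g_twopairs {x y a b c d q q' : V} {r : V → ℕ} (hab : a ≠ b) (hcd : c ≠ d)
    (hca : c ≠ a) (hcb : c ≠ b) (hda : d ≠ a) (hdb : d ≠ b)
    (hcq : c ≠ q) (hdq : d ≠ q) (hqq' : q ≠ q')
    (ha : G.Adj a q) (hb : G.Adj b q) (hc : G.Adj c q') (hd : G.Adj d q')
    (hqy : G.Adj q y) (hq'y : G.Adj q' y) (hxy : G.Adj x y)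
    (h1 : 1 ≤ r a) (h2 : 1 ≤ r b) (h3 : 1 ≤ r c) (h4 : 1 ≤ r d) :
    NProd G x r := by
  set r1 := afterStrict r a b q with hr1
  have step1 : IsRubblingMove G r r1 := isStrict r hab ha hb h1 h2
  have h3' : 1 ≤ r1 c := by rw [hr1, afterStrict_other r hca hcb hcq]; omega
  have h4' : 1 ≤ r1 d := by rw [hr1, afterStrict_other r hda hdb hdq]; omega
  set r2 := afterStrict r1 c d q' with hr2
  have step2 : IsRubblingMove G r1 r2 := isStrict r1 hcd hc hd h3' h4'
  have hq1 : 1 ≤ r2 q := by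
    rw [hr2, afterStrict_other r1 (Ne.symm hcq) (Ne.symm hdq) hqq', hr1,
      afterStrict_u r ha.ne hb.ne]
    omega
  have hq'1 : 1 ≤ r2 q' := by
    rw [hr2, afterStrict_u r1 hc.ne hd.ne]; omega
  refine ⟨afterStrict r2 q q' y, y,
    ((Relation.ReflTransGen.refl.tail step1).tail step2).tail
      (isStrict r2 hqq' hqy hq'y hq1 hq'1), hxy, ?_⟩
  rw [afterStrict_u r2 hqy.ne hq'y.ne]; omega

end
section
variable {V : Type*} {G : SimpleGraph V}

lemma common_nbr_of_diam_two (hconn : G.Connected) (hdiam : G.diam = 2)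
    {u v : V} (hne : u ≠ v) (hnadj : ¬G.Adj u v) : ∃ c, G.Adj u c ∧ G.Adj v c := by
  have hnt : G.ediam ≠ ⊤ := SimpleGraph.ediam_ne_top_of_diam_ne_zero (by rw [hdiam]; omega)
  have hd2 : G.dist u v ≤ 2 := hdiam ▸ SimpleGraph.dist_le_diam hnt
  have hr : G.Reachable u v := hconn.preconnected u v
  obtain ⟨w, hw⟩ := hr.exists_walk_length_eq_dist
  have hlen : w.length ≤ 2 := by rw [hw]; exact hd2
  match w, hlen with
  | SimpleGraph.Walk.nil, _ => exact absurd rfl hne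
  | SimpleGraph.Walk.cons h SimpleGraph.Walk.nil, _ => exact absurd h hnadj
  | SimpleGraph.Walk.cons (v := c) h (SimpleGraph.Walk.cons h' SimpleGraph.Walk.nil), _ =>
    exact ⟨c, h, h'.symm⟩
  | SimpleGraph.Walk.cons _ (SimpleGraph.Walk.cons _ (SimpleGraph.Walk.cons _ _)), hl =>
    exact absurd hl (by simp [SimpleGraph.Walk.length_cons])

end
section
variable {V : Type*} [DecidableEq V]

/-- Counting lemma for a family of triples that pairwise meet in 0 or 2 vertices, where
matched vertices inside a triple come in pairs: the number of non-matched pairs covered is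
controlled by the number of triples plus the number of unmatched vertices used. -/
lemma tri_count (M : Finset V) (f : V → V) (𝒯 : Finset (Finset V))
    (h3 : ∀ T ∈ 𝒯, T.card = 3)
    (hM : ∀ T ∈ 𝒯, ∀ v ∈ T, v ∈ M → f v ∈ T ∧ f v ∈ M ∧ f v ≠ v ∧ f (f v) = v)
    (hint : ∀ T ∈ 𝒯, ∀ T' ∈ 𝒯, T ≠ T' → (T ∩ T').card = 0 ∨ (T ∩ T').card = 2) :
    3 * ((𝒯.biUnion (fun T => T.powersetCard 2)).filter (fun e => ¬ e ⊆ M)).card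
      ≤ 6 * 𝒯.card + ((𝒯.biUnion id) \ M).card := by
  classical
  induction 𝒯 using Finset.induction_on with
  | empty => simp
  | @insert T₀ 𝒯' hT₀ ih =>
    have h3' : ∀ T ∈ 𝒯', T.card = 3 := fun T hT => h3 T (mem_insert_of_mem hT)
    have hM' : ∀ T ∈ 𝒯', ∀ v ∈ T, v ∈ M → f v ∈ T ∧ f v ∈ M ∧ f v ≠ v ∧ f (f v) = v :=
      fun T hT => hM T (mem_insert_of_mem hT)
    have hint' : ∀ T ∈ 𝒯', ∀ T' ∈ 𝒯', T ≠ T' → (T ∩ T').card = 0 ∨ (T ∩ T').card = 2 :=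
      fun T hT T' hT' => hint T (mem_insert_of_mem hT) T' (mem_insert_of_mem hT')
    have IH := ih h3' hM' hint'
    have hT₀3 : T₀.card = 3 := h3 T₀ (mem_insert_self _ _)
    set U' := ((𝒯'.biUnion (fun T => T.powersetCard 2)).filter (fun e => ¬ e ⊆ M)) with hU'
    set P₀ := ((T₀.powersetCard 2).filter (fun e => ¬ e ⊆ M)) with hP₀
    have hUsplit : ((insert T₀ 𝒯').biUnion (fun T => T.powersetCard 2)).filter
        (fun e => ¬ e ⊆ M) = P₀ ∪ U' := by
      rw [Finset.biUnion_insert, Finset.filter_union]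
    have hVsub : ((𝒯'.biUnion id) \ M) ⊆ (((insert T₀ 𝒯').biUnion id) \ M) := by
      apply Finset.sdiff_subset_sdiff _ le_rfl
      rw [Finset.biUnion_insert]
      exact Finset.subset_union_right
    have hcard_ins : (insert T₀ 𝒯').card = 𝒯'.card + 1 := Finset.card_insert_of_notMem hT₀
    by_cases hshare : ∃ T ∈ 𝒯', (T₀ ∩ T).card = 2
    · -- shares a pair with an older triple
      obtain ⟨T, hT, hTcard⟩ := hshare
      set e : Finset V := T₀ ∩ T with he
      have heP : e ∈ T₀.powersetCard 2 :=
        Finset.mem_powersetCard.2 ⟨Finset.inter_subset_left, hTcard⟩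
      have heP' : e ∈ T.powersetCard 2 :=
        Finset.mem_powersetCard.2 ⟨Finset.inter_subset_right, hTcard⟩
      have hsub : P₀ ∪ U' ⊆ U' ∪ ((T₀.powersetCard 2).erase e) := by
        intro a ha
        rcases Finset.mem_union.1 ha with ha | ha
        · rw [hP₀, Finset.mem_filter] at ha
          by_cases hae : a = e
          · subst hae
            refine Finset.mem_union_left _ ?_
            rw [hU', Finset.mem_filter]
            exact ⟨Finset.mem_biUnion.2 ⟨T, hT, heP'⟩, ha.2⟩
          · exact Finset.mem_union_right _ (Finset.mem_erase.2 ⟨hae, ha.1⟩)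
        · exact Finset.mem_union_left _ ha
      have hcard1 : (P₀ ∪ U').card ≤ U'.card + 2 := by
        calc (P₀ ∪ U').card ≤ (U' ∪ ((T₀.powersetCard 2).erase e)).card :=
              Finset.card_le_card hsub
          _ ≤ U'.card + ((T₀.powersetCard 2).erase e).card := Finset.card_union_le _ _
          _ ≤ U'.card + 2 := by
              have : ((T₀.powersetCard 2).erase e).card = (T₀.powersetCard 2).card - 1 :=
                Finset.card_erase_of_mem heP
              rw [this, Finset.card_powersetCard, hT₀3]
              norm_num
      rw [hUsplit, hcard_ins]
      have := Finset.card_le_card hVsub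
      omega
    · -- disjoint from all older triples
      push_neg at hshare
      have hdisj : ∀ T ∈ 𝒯', T₀ ∩ T = ∅ := by
        intro T hT
        have hne : T₀ ≠ T := fun h => hT₀ (h ▸ hT)
        rcases hint T₀ (mem_insert_self _ _) T (mem_insert_of_mem hT) hne with h0 | h2
        · exact Finset.card_eq_zero.1 h0
        · exact absurd h2 (hshare T hT)
      have hVdisj : Disjoint (T₀ \ M) ((𝒯'.biUnion id) \ M) := by
        rw [Finset.disjoint_left]
        intro a ha ha'
        obtain ⟨T, hT, haT⟩ := Finset.mem_biUnion.1 (Finset.mem_sdiff.1 ha').1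
        have : a ∈ T₀ ∩ T := Finset.mem_inter.2 ⟨(Finset.mem_sdiff.1 ha).1, haT⟩
        rw [hdisj T hT] at this
        exact absurd this (Finset.notMem_empty a)
      have hVeq : (((insert T₀ 𝒯').biUnion id) \ M).card
          = (T₀ \ M).card + ((𝒯'.biUnion id) \ M).card := by
        rw [Finset.biUnion_insert]
        rw [show (id T₀ ∪ 𝒯'.biUnion id) \ M = (T₀ \ M) ∪ ((𝒯'.biUnion id) \ M) by
          simp [Finset.union_sdiff_distrib]]
        exact Finset.card_union_of_disjoint hVdisj
      have hcard1 : (P₀ ∪ U').card ≤ P₀.card + U'.card := Finset.card_union_le _ _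
      by_cases hTM : ∃ v ∈ T₀, v ∈ M
      · -- T₀ contains a matched edge {v, f v}
        obtain ⟨v, hvT, hvM⟩ := hTM
        obtain ⟨hfvT, hfvM, hfvne, hffv⟩ := hM T₀ (mem_insert_self _ _) v hvT hvM
        set ep : Finset V := {v, f v} with hep
        have hepM : ep ⊆ M := by
          intro a ha
          rcases Finset.mem_insert.1 ha with h | h
          · exact h ▸ hvM
          · rw [Finset.mem_singleton.1 h]; exact hfvM
        have hepP : ep ∈ T₀.powersetCard 2 := by
          refine Finset.mem_powersetCard.2 ⟨?_, ?_⟩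
          · intro a ha
            rcases Finset.mem_insert.1 ha with h | h
            · exact h ▸ hvT
            · rw [Finset.mem_singleton.1 h]; exact hfvT
          · rw [Finset.card_insert_of_notMem (by simp [Ne.symm hfvne]), Finset.card_singleton]
        have hP₀sub : P₀ ⊆ (T₀.powersetCard 2).erase ep := by
          intro a ha
          rw [hP₀, Finset.mem_filter] at ha
          refine Finset.mem_erase.2 ⟨?_, ha.1⟩
          intro h
          exact ha.2 (h ▸ hepM)
        have hP₀card : P₀.card ≤ 2 := by
          calc P₀.card ≤ ((T₀.powersetCard 2).erase ep).card := Finset.card_le_card hP₀sub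
            _ = (T₀.powersetCard 2).card - 1 := Finset.card_erase_of_mem hepP
            _ ≤ 2 := by rw [Finset.card_powersetCard, hT₀3]; norm_num
        rw [hUsplit, hcard_ins, hVeq]
        omega
      · push_neg at hTM
        have hT₀M : T₀ \ M = T₀ := by
          apply Finset.sdiff_eq_self_of_disjoint
          rw [Finset.disjoint_left]
          exact fun a ha ha' => hTM a ha ha'
        have hP₀card : P₀.card ≤ 3 := by
          calc P₀.card ≤ (T₀.powersetCard 2).card := Finset.card_filter_le _ _
            _ = 3 := by rw [Finset.card_powersetCard, hT₀3]; rfl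
        rw [hUsplit, hcard_ins, hVeq, hT₀M, hT₀3]
        omega
end
section
variable {V : Type*} [Fintype V] [DecidableEq V] {G : SimpleGraph V}

lemma two_choose (s : ℕ) : 2 * s.choose 2 = s * (s - 1) := by
  induction s with
  | zero => rfl
  | succ m ih =>
    rw [Nat.choose_succ_succ, Nat.mul_add, ih, Nat.choose_one_right]
    cases m with
    | zero => rfl
    | succ k =>
      have : (k + 1 + 1) * (k + 1 + 1 - 1) = (k+1) * (k + 1 - 1) + 2 * (k+1) := by
        simp only [Nat.add_sub_cancel]
        ring
      omega

lemma pair_of_two {D : Finset V} (h : 2 ≤ D.card) : ∃ a ∈ D, ∃ b ∈ D, a ≠ b :=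
  Finset.one_lt_card.1 h

lemma cle2 (a b : V) : ({a, b} : Finset V).card ≤ 2 :=
  (Finset.card_insert_le _ _).trans (by simp)

lemma cle3 (a b c : V) : ({a, b, c} : Finset V).card ≤ 3 :=
  (Finset.card_insert_le _ _).trans (Nat.add_le_add_right (cle2 b c) 1)

lemma cle4 (a b c d : V) : ({a, b, c, d} : Finset V).card ≤ 4 :=
  (Finset.card_insert_le _ _).trans (Nat.add_le_add_right (cle3 b c d) 1)

lemma cle5 (a b c d e : V) : ({a, b, c, d, e} : Finset V).card ≤ 5 :=
  (Finset.card_insert_le _ _).trans (Nat.add_le_add_right (cle4 b c d e) 1)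

lemma core_count (hconn : G.Connected) (hdiam : G.diam = 2)
    (x : V) (S : Finset V)
    (hSx : ∀ a ∈ S, ¬ G.Adj x a ∧ a ≠ x)
    (hg : ∀ D : Finset V, D ⊆ S → D.card ≤ 5 →
      ¬ NProd G x (fun v => if v ∈ D then (1:ℕ) else 0)) :
    (S.card + 1)^2 ≤ 2 * Fintype.card V - 1 := by
  classical
  -- a vertex distinct from and non-adjacent to x has a common neighbour with x
  have hFN : ∀ v, v ≠ x → ¬ G.Adj x v → ∃ y, G.Adj v y ∧ G.Adj x y := by
    intro v hv hnv
    exact common_nbr_of_diam_two hconn hdiam hv (fun h => hnv h.symm)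
  -- basic indicator facts
  have hind : ∀ (D : Finset V) (a : V), a ∈ D → 1 ≤ (fun v => if v ∈ D then 1 else 0 : V → ℕ) a := by
    intro D a ha; simp [ha]
  -- fact1 : no vertex adjacent to x has two pebbled neighbours
  have fact1 : ∀ y, G.Adj x y → ∀ a ∈ S, ∀ b ∈ S, a ≠ b → G.Adj a y → G.Adj b y → False := by
    intro y hxy a ha b hb hab hay hby
    refine hg {a, b} ?_ ?_ (g_goodpair hab hay hby hxy (by simp) (by simp))
    · intro z hz; rcases Finset.mem_insert.1 hz with h | h
      · exact h ▸ ha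
      · exact (Finset.mem_singleton.1 h) ▸ hb
    · exact (cle2 a b).trans (by norm_num)
  -- fact2 : no vertex of S has two neighbours in S
  have fact2 : ∀ z ∈ S, ∀ a ∈ S, ∀ b ∈ S, a ≠ b → G.Adj a z → G.Adj b z → False := by
    intro z hz a ha b hb hab haz hbz
    obtain ⟨hnxz, hzx⟩ := hSx z hz
    obtain ⟨y, hyz, hxy⟩ := hFN z hzx hnxz
    refine hg {a, b, z} ?_ ?_ (g_cherry hab haz hbz hyz hxy (by simp) (by simp)
      (by simp [haz.ne', hbz.ne']))
    · intro w hw; simp only [Finset.mem_insert, Finset.mem_singleton] at hw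
      rcases hw with h | h | h
      · exact h ▸ ha
      · exact h ▸ hb
      · exact h ▸ hz
    · exact (cle3 a b z).trans (by norm_num)
  -- fact3 : every vertex other than x and its neighbours has at most 3 neighbours in S
  have fact3 : ∀ q, q ≠ x → ¬ G.Adj x q → q ∉ S →
      (S.filter (fun a => G.Adj q a)).card ≤ 3 := by
    intro q hqx hnxq hqS
    by_contra hc
    push_neg at hc
    obtain ⟨a, ha, b, hb, hab⟩ := pair_of_two (by omega :
      2 ≤ (S.filter (fun a => G.Adj q a)).card)
    have hbe : b ∈ (S.filter (fun a => G.Adj q a)).erase a := Finset.mem_erase.2 ⟨hab.symm, hb⟩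
    have h2 : 2 ≤ (((S.filter (fun a => G.Adj q a)).erase a).erase b).card := by
      rw [Finset.card_erase_of_mem hbe, Finset.card_erase_of_mem ha]
      omega
    obtain ⟨c, hc1, d, hd1, hcd⟩ := pair_of_two h2
    obtain ⟨hcb, hc2⟩ := Finset.mem_erase.1 hc1
    obtain ⟨hca, hc3⟩ := Finset.mem_erase.1 hc2
    obtain ⟨hdb, hd2⟩ := Finset.mem_erase.1 hd1
    obtain ⟨hda, hd3⟩ := Finset.mem_erase.1 hd2
    obtain ⟨y, hqy, hxy⟩ := hFN q hqx hnxq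
    have haS := Finset.mem_filter.1 ha
    have hbS := Finset.mem_filter.1 hb
    have hcS := Finset.mem_filter.1 hc3
    have hdS := Finset.mem_filter.1 hd3
    refine hg {a, b, c, d} (by simp [Finset.insert_subset_iff, haS.1, hbS.1, hcS.1, hdS.1])
      ((cle4 a b c d).trans (by norm_num))
      (g_collision hab hcd hca hcb hda hdb haS.2.symm hbS.2.symm hcS.2.symm hdS.2.symm
        hqy hxy ?_ ?_ ?_ ?_) <;> simp [hab, hca, hcb, hda, hdb, hcd]
  -- fact4 : a cover adjacent to a matched vertex v has no two S-neighbours besides v, w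
  have fact4 : ∀ v ∈ S, ∀ w ∈ S, G.Adj v w → ∀ q, q ∉ S → ¬ G.Adj x q → q ≠ x → G.Adj q v →
      (((S.filter (fun a => G.Adj q a)).erase v).erase w).card ≤ 1 := by
    intro v hv w hw hvw q hqS hnxq hqx hqv
    by_contra hc
    push_neg at hc
    obtain ⟨a, ha1, b, hb1, hab⟩ := pair_of_two (by omega :
      2 ≤ ((((S.filter (fun a => G.Adj q a)).erase v).erase w)).card)
    obtain ⟨haw, ha2⟩ := Finset.mem_erase.1 ha1
    obtain ⟨hav, ha3⟩ := Finset.mem_erase.1 ha2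
    obtain ⟨hbw, hb2⟩ := Finset.mem_erase.1 hb1
    obtain ⟨hbv, hb3⟩ := Finset.mem_erase.1 hb2
    have haS := Finset.mem_filter.1 ha3
    have hbS := Finset.mem_filter.1 hb3
    obtain ⟨hnxv, hvx⟩ := hSx v hv
    obtain ⟨y, hvy, hxy⟩ := hFN v hvx hnxv
    have hwq : w ≠ q := fun h => hqS (h ▸ hw)
    refine hg {a, b, w, v} (by simp [Finset.insert_subset_iff, haS.1, hbS.1, hw, hv])
      ((cle4 a b w v).trans (by norm_num))
      (g_matched hab haS.2.symm hbS.2.symm (Ne.symm haw) (Ne.symm hbw) hwq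
        (Ne.symm hav) (Ne.symm hbv) hqv hvw.symm hvy hxy ?_ ?_ ?_ ?_) <;>
      simp [hab, haw, hbw, hav, hbv, hvw.ne']
  -- a triple through a matched vertex contains its partner
  have tripleM : ∀ q, q ∉ S → ¬ G.Adj x q → q ≠ x → (S.filter (fun a => G.Adj q a)).card = 3 →
      ∀ v ∈ S.filter (fun a => G.Adj q a), ∀ w ∈ S, G.Adj v w →
      w ∈ S.filter (fun a => G.Adj q a) := by
    intro q hqS hnxq hqx h3 v hv w hw hvw
    by_contra hwT
    have h4 := fact4 v (Finset.mem_filter.1 hv).1 w hw hvw q hqS hnxq hqx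
      (Finset.mem_filter.1 hv).2
    have hwE : w ∉ (S.filter (fun a => G.Adj q a)).erase v :=
      fun h => hwT (Finset.mem_erase.1 h).2
    rw [Finset.erase_eq_self.2 hwE, Finset.card_erase_of_mem hv, h3] at h4
    omega
  -- fact5 : two triples never share exactly one vertex
  have fact5 : ∀ q, q ∉ S → ¬ G.Adj x q → q ≠ x → ∀ q', q' ∉ S → ¬ G.Adj x q' → q' ≠ x →
      q ≠ q' → (S.filter (fun a => G.Adj q a)).card = 3 →
      (S.filter (fun a => G.Adj q' a)).card = 3 →
      ((S.filter (fun a => G.Adj q a)) ∩ (S.filter (fun a => G.Adj q' a))).card ≠ 1 := by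
    intro q hqS hnxq hqx q' hq'S hnxq' hq'x hqq' h3 h3' hcap
    set T := S.filter (fun a => G.Adj q a) with hT
    set T' := S.filter (fun a => G.Adj q' a) with hT'
    obtain ⟨e, he⟩ := Finset.card_eq_one.1 hcap
    have heT : e ∈ T := (Finset.mem_inter.1 (he ▸ Finset.mem_singleton_self e)).1
    have heT' : e ∈ T' := (Finset.mem_inter.1 (he ▸ Finset.mem_singleton_self e)).2
    have h2T : 2 ≤ (T.erase e).card := by rw [Finset.card_erase_of_mem heT, h3]
    have h2T' : 2 ≤ (T'.erase e).card := by rw [Finset.card_erase_of_mem heT', h3']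
    obtain ⟨a, ha1, b, hb1, hab⟩ := pair_of_two h2T
    obtain ⟨c, hc1, d, hd1, hcd⟩ := pair_of_two h2T'
    obtain ⟨hae, haT⟩ := Finset.mem_erase.1 ha1
    obtain ⟨hbe, hbT⟩ := Finset.mem_erase.1 hb1
    obtain ⟨hce, hcT'⟩ := Finset.mem_erase.1 hc1
    obtain ⟨hde, hdT'⟩ := Finset.mem_erase.1 hd1
    have hnotT : ∀ z, z ∈ T' → z ≠ e → z ∉ T := by
      intro z hz hne hzT
      have : z ∈ T ∩ T' := Finset.mem_inter.2 ⟨hzT, hz⟩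
      rw [he] at this
      exact hne (Finset.mem_singleton.1 this)
    have hca : c ≠ a := fun h => hnotT c hcT' hce (h ▸ haT)
    have hcb : c ≠ b := fun h => hnotT c hcT' hce (h ▸ hbT)
    have hda : d ≠ a := fun h => hnotT d hdT' hde (h ▸ haT)
    have hdb : d ≠ b := fun h => hnotT d hdT' hde (h ▸ hbT)
    have haS := Finset.mem_filter.1 haT
    have hbS := Finset.mem_filter.1 hbT
    have hcS := Finset.mem_filter.1 hcT'
    have hdS := Finset.mem_filter.1 hdT'
    have heS := Finset.mem_filter.1 heT
    have heS' := Finset.mem_filter.1 heT'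
    obtain ⟨hnxe, hex⟩ := hSx e heS.1
    obtain ⟨y, hey, hxy⟩ := hFN e hex hnxe
    refine hg {a, b, c, d, e}
      (by simp [Finset.insert_subset_iff, haS.1, hbS.1, hcS.1, hdS.1, heS.1]) (cle5 a b c d e)
      (g_share1 hab hcd hca hcb hda hdb (fun h => hqS (by rw [← h]; exact hcS.1)) (fun h => hqS (by rw [← h]; exact hdS.1))
        hqq' (Ne.symm hae) (Ne.symm hbe) (Ne.symm hce) (Ne.symm hde)
        haS.2.symm hbS.2.symm hcS.2.symm hdS.2.symm heS.2 heS'.2 hey hxy ?_ ?_ ?_ ?_ ?_) <;>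
      simp [hab, hca, hcb, hda, hdb, hcd, hae, hbe, hce, hde]
  -- ===== the counting =====
  set s := S.card with hs
  -- the partial matching inside S
  set M := S.filter (fun v => ∃ w ∈ S, G.Adj v w) with hM
  set f : V → V := fun v => if h : ∃ w ∈ S, G.Adj v w then h.choose else v with hf
  have hfspec : ∀ v, (h : ∃ w ∈ S, G.Adj v w) → f v ∈ S ∧ G.Adj v (f v) := by
    intro v hv
    rw [hf]
    simp only [dif_pos hv]
    exact ⟨hv.choose_spec.1, hv.choose_spec.2⟩
  have hfM : ∀ v ∈ M, f v ∈ M ∧ G.Adj v (f v) ∧ f v ≠ v ∧ f (f v) = v := by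
    intro v hv
    obtain ⟨hvS, hex⟩ := Finset.mem_filter.1 hv
    obtain ⟨hfS, hfadj⟩ := hfspec v hex
    have hfvM : f v ∈ M := Finset.mem_filter.2 ⟨hfS, ⟨v, hvS, hfadj.symm⟩⟩
    have hffex : ∃ w ∈ S, G.Adj (f v) w := ⟨v, hvS, hfadj.symm⟩
    obtain ⟨hffS, hffadj⟩ := hfspec (f v) hffex
    have hffv : f (f v) = v := by
      by_contra hne
      exact fact2 (f v) hfS (f (f v)) hffS v hvS hne hffadj.symm hfadj
    exact ⟨hfvM, hfadj, fun h => G.irrefl (h ▸ hfadj), hffv⟩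
  -- pairs of S
  set Pall := S.powersetCard 2 with hPall
  set Padj := Pall.filter (fun e => ∃ a ∈ e, ∃ b ∈ e, G.Adj a b) with hPadj
  set Pna := Pall.filter (fun e => ¬ ∃ a ∈ e, ∃ b ∈ e, G.Adj a b) with hPna
  have hPsplit : Padj.card + Pna.card = Pall.card :=
    Finset.card_filter_add_card_filter_not _
  have hPallcard : Pall.card = s.choose 2 := by
    rw [hPall, Finset.card_powersetCard]
  have epair : ∀ e ∈ Pall, ∃ a b, a ≠ b ∧ e = {a, b} ∧ a ∈ S ∧ b ∈ S := by
    intro e he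
    obtain ⟨heS, hec⟩ := Finset.mem_powersetCard.1 he
    obtain ⟨a, b, hab, hab2⟩ := Finset.card_eq_two.1 hec
    exact ⟨a, b, hab, hab2, heS (hab2 ▸ Finset.mem_insert_self a {b}),
      heS (hab2 ▸ Finset.mem_insert_of_mem (Finset.mem_singleton_self b))⟩
  -- each adjacent pair consists of matched vertices and pairs are disjoint
  have hPadjM : ∀ e ∈ Padj, e ⊆ M ∧ ∀ v ∈ e, ∃ w ∈ e, w ≠ v ∧ G.Adj v w := by
    intro e he
    obtain ⟨hePall, a', ha', b', hb', hadj⟩ := Finset.mem_filter.1 he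
    obtain ⟨haS, hbS⟩ : a' ∈ S ∧ b' ∈ S := by
      obtain ⟨heS, _⟩ := Finset.mem_powersetCard.1 hePall
      exact ⟨heS ha', heS hb'⟩
    have hother : ∀ v ∈ e, ∃ w ∈ e, w ≠ v ∧ G.Adj v w := by
      intro v hv
      obtain ⟨c, d, hcd, hecd, hcS, hdS⟩ := epair e hePall
      have hig : (c = a' ∧ d = b') ∨ (c = b' ∧ d = a') := by
        have ha'' : a' ∈ ({c, d} : Finset V) := hecd ▸ ha'
        have hb'' : b' ∈ ({c, d} : Finset V) := hecd ▸ hb'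
        simp only [Finset.mem_insert, Finset.mem_singleton] at ha'' hb''
        rcases ha'' with h1 | h1 <;> rcases hb'' with h2 | h2 <;>
          first
          | (left; exact ⟨h1.symm, h2.symm⟩)
          | (right; exact ⟨h2.symm, h1.symm⟩)
          | (exact absurd (h1.trans h2.symm) hadj.ne)
      have hvmem : v = c ∨ v = d := by
        have := hecd ▸ hv
        simpa only [Finset.mem_insert, Finset.mem_singleton] using this
      have hcdadj : G.Adj c d := by
        rcases hig with ⟨h1, h2⟩ | ⟨h1, h2⟩
        · exact h1 ▸ h2 ▸ hadj
        · exact (h1 ▸ h2 ▸ hadj).symm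
      rcases hvmem with h | h
      · refine ⟨d, hecd ▸ Finset.mem_insert_of_mem (Finset.mem_singleton_self d), ?_, h ▸ hcdadj⟩
        exact fun hdc => hcd (h ▸ hdc.symm) |>.elim
      · refine ⟨c, hecd ▸ Finset.mem_insert_self c {d}, ?_, h ▸ hcdadj.symm⟩
        exact fun hdc => hcd (h ▸ hdc) |>.elim
    refine ⟨?_, hother⟩
    intro v hv
    obtain ⟨w, hw, hwv, hadjv⟩ := hother v hv
    obtain ⟨heS, _⟩ := Finset.mem_powersetCard.1 hePall
    exact Finset.mem_filter.2 ⟨heS hv, ⟨w, heS hw, hadjv⟩⟩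
  have hPadjDisj : ∀ e ∈ Padj, ∀ e' ∈ Padj, e ≠ e' → Disjoint e e' := by
    intro e he e' he' hee
    rw [Finset.disjoint_left]
    intro v hv hv'
    obtain ⟨w, hw, hwv, hadj⟩ := (hPadjM e he).2 v hv
    obtain ⟨w', hw', hwv', hadj'⟩ := (hPadjM e' he').2 v hv'
    have heS := (Finset.mem_powersetCard.1 (Finset.mem_filter.1 he).1)
    have heS' := (Finset.mem_powersetCard.1 (Finset.mem_filter.1 he').1)
    have hvS : v ∈ S := heS.1 hv
    by_cases hww : w = w'
    · -- then e = {v,w} = e'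
      apply hee
      have h1 : ({v, w} : Finset V) ⊆ e := by
        intro z hz; rcases Finset.mem_insert.1 hz with h | h
        · exact h ▸ hv
        · exact (Finset.mem_singleton.1 h) ▸ hw
      have h2 : ({v, w} : Finset V) ⊆ e' := by
        intro z hz; rcases Finset.mem_insert.1 hz with h | h
        · exact h ▸ hv'
        · exact (Finset.mem_singleton.1 h) ▸ (hww ▸ hw')
      have hc : ({v, w} : Finset V).card = 2 := by
        rw [Finset.card_insert_of_notMem (by simp [(Ne.symm hwv)]), Finset.card_singleton]
      have he2 := (Finset.mem_powersetCard.1 (Finset.mem_filter.1 he).1).2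
      have he2' := (Finset.mem_powersetCard.1 (Finset.mem_filter.1 he').1).2
      rw [← Finset.eq_of_subset_of_card_le h1 (by omega),
        ← Finset.eq_of_subset_of_card_le h2 (by omega)]
    · exact fact2 v hvS w (heS.1 hw) w' (heS'.1 hw') hww hadj.symm hadj'.symm
  have hMbound : 2 * Padj.card ≤ M.card := by
    have hbu : Padj.biUnion id ⊆ M := by
      intro v hv
      obtain ⟨e, he, hve⟩ := Finset.mem_biUnion.1 hv
      exact (hPadjM e he).1 hve
    have hcb : (Padj.biUnion id).card = ∑ e ∈ Padj, e.card :=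
      Finset.card_biUnion (fun e he e' he' hne => hPadjDisj e he e' he' hne)
    have hsum : ∑ e ∈ Padj, e.card = 2 * Padj.card := by
      rw [Finset.sum_congr rfl (fun e he =>
        (Finset.mem_powersetCard.1 (Finset.mem_filter.1 he).1).2), Finset.sum_const,
        smul_eq_mul, mul_comm]
    calc 2 * Padj.card = (Padj.biUnion id).card := by rw [hcb, hsum]
      _ ≤ M.card := Finset.card_le_card hbu
  have hMS : M.card ≤ s := Finset.card_filter_le _ _
  -- covers of nonadjacent pairs
  have hcov : ∀ e ∈ Pna, ∃ q, (q ∉ S ∧ ¬ G.Adj x q ∧ q ≠ x) ∧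
      e ⊆ S.filter (fun a => G.Adj q a) := by
    intro e he
    obtain ⟨hePall, hena⟩ := Finset.mem_filter.1 he
    obtain ⟨a, b, hab, hecd, haS, hbS⟩ := epair e hePall
    have hnadj : ¬ G.Adj a b := by
      intro h
      exact hena ⟨a, hecd ▸ Finset.mem_insert_self a {b},
        b, hecd ▸ Finset.mem_insert_of_mem (Finset.mem_singleton_self b), h⟩
    obtain ⟨q, haq, hbq⟩ := common_nbr_of_diam_two hconn hdiam hab hnadj
    have hqS : q ∉ S := fun hq => fact2 q hq a haS b hbS hab haq hbq
    have hnxq : ¬ G.Adj x q := fun hq => fact1 q hq a haS b hbS hab haq hbq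
    have hqx : q ≠ x := by
      intro h
      exact (hSx a haS).1 ((h ▸ haq).symm)
    refine ⟨q, ⟨hqS, hnxq, hqx⟩, ?_⟩
    intro z hz
    have : z = a ∨ z = b := by
      have := hecd ▸ hz
      simpa only [Finset.mem_insert, Finset.mem_singleton] using this
    rcases this with h | h
    · exact Finset.mem_filter.2 ⟨h ▸ haS, h ▸ haq.symm⟩
    · exact Finset.mem_filter.2 ⟨h ▸ hbS, h ▸ hbq.symm⟩
  -- the family of triples
  set Bcov := Finset.univ.filter (fun q : V => q ∉ S ∧ ¬ G.Adj x q ∧ q ≠ x ∧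
    (S.filter (fun a => G.Adj q a)).card = 3) with hBcov
  set 𝒯 := Bcov.image (fun q => S.filter (fun a => G.Adj q a)) with h𝒯
  have h𝒯rep : ∀ T ∈ 𝒯, ∃ q ∈ Bcov, S.filter (fun a => G.Adj q a) = T := by
    intro T hT
    obtain ⟨q, hq, hqT⟩ := Finset.mem_image.1 hT
    exact ⟨q, hq, hqT⟩
  have h𝒯card : ∀ T ∈ 𝒯, T.card = 3 := by
    intro T hT
    obtain ⟨q, hq, hqT⟩ := h𝒯rep T hT
    rw [← hqT]
    exact (Finset.mem_filter.1 hq).2.2.2.2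
  have h𝒯S : ∀ T ∈ 𝒯, T ⊆ S := by
    intro T hT
    obtain ⟨q, hq, hqT⟩ := h𝒯rep T hT
    rw [← hqT]
    exact Finset.filter_subset _ _
  have h𝒯M : ∀ T ∈ 𝒯, ∀ v ∈ T, v ∈ M → f v ∈ T ∧ f v ∈ M ∧ f v ≠ v ∧ f (f v) = v := by
    intro T hT v hvT hvM
    obtain ⟨q, hq, hqT⟩ := h𝒯rep T hT
    obtain ⟨hqS, hnxq, hqx, h3⟩ := (Finset.mem_filter.1 hq).2
    obtain ⟨hfvM, hfadj, hfne, hffv⟩ := hfM v hvM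
    have hfS : f v ∈ S := (Finset.mem_filter.1 hfvM).1
    have : f v ∈ S.filter (fun a => G.Adj q a) :=
      tripleM q hqS hnxq hqx h3 v (hqT ▸ hvT) (f v) hfS hfadj
    exact ⟨hqT ▸ this, hfvM, hfne, hffv⟩
  have h𝒯int : ∀ T ∈ 𝒯, ∀ T' ∈ 𝒯, T ≠ T' → (T ∩ T').card = 0 ∨ (T ∩ T').card = 2 := by
    intro T hT T' hT' hTT
    obtain ⟨q, hq, hqT⟩ := h𝒯rep T hT
    obtain ⟨q', hq', hqT'⟩ := h𝒯rep T' hT'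
    obtain ⟨hqS, hnxq, hqx, h3⟩ := (Finset.mem_filter.1 hq).2
    obtain ⟨hqS', hnxq', hqx', h3'⟩ := (Finset.mem_filter.1 hq').2
    have hqq' : q ≠ q' := by
      intro h
      exact hTT (hqT ▸ h ▸ hqT')
    have hne1 : (T ∩ T').card ≠ 1 := by
      have := fact5 q hqS hnxq hqx q' hqS' hnxq' hqx' hqq' h3 h3'
      rw [hqT, hqT'] at this
      exact this
    have hle : (T ∩ T').card ≤ 3 := by
      calc (T ∩ T').card ≤ T.card := Finset.card_le_card Finset.inter_subset_left
        _ = 3 := h𝒯card T hT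
    have hne3 : (T ∩ T').card ≠ 3 := by
      intro h
      apply hTT
      have hsub : T ⊆ T' := by
        have : T ∩ T' = T := Finset.eq_of_subset_of_card_le Finset.inter_subset_left
          (by rw [h, h𝒯card T hT])
        intro z hz
        exact Finset.mem_inter.1 (this ▸ hz) |>.2
      exact Finset.eq_of_subset_of_card_le hsub (by rw [h𝒯card T hT, h𝒯card T' hT'])
    omega
  -- apply the triple counting lemma
  have htri := tri_count M f 𝒯 h𝒯card h𝒯M h𝒯int
  set Una := (𝒯.biUnion (fun T => T.powersetCard 2)).filter (fun e => ¬ e ⊆ M) with hUna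
  -- coverage: every nonadjacent pair is in Una or is the pair of a degree-2 cover
  set P3 := Pna.filter (fun e => ∃ T ∈ 𝒯, e ⊆ T) with hP3
  set P2 := Pna.filter (fun e => ¬ ∃ T ∈ 𝒯, e ⊆ T) with hP2
  have hP23 : P3.card + P2.card = Pna.card :=
    Finset.card_filter_add_card_filter_not _
  have hP3U : P3 ⊆ Una := by
    intro e he
    obtain ⟨hePna, T, hT, heT⟩ := Finset.mem_filter.1 he
    obtain ⟨hePall, hena⟩ := Finset.mem_filter.1 hePna
    have hec : e.card = 2 := (Finset.mem_powersetCard.1 hePall).2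
    refine Finset.mem_filter.2 ⟨Finset.mem_biUnion.2 ⟨T, hT, Finset.mem_powersetCard.2
      ⟨heT, hec⟩⟩, ?_⟩
    -- e is not inside M : otherwise its two vertices would be partners, hence adjacent
    intro heM
    obtain ⟨a, b, hab, hecd, haS, hbS⟩ := epair e hePall
    have haM : a ∈ M := heM (hecd ▸ Finset.mem_insert_self a {b})
    have hbM : b ∈ M := heM (hecd ▸ Finset.mem_insert_of_mem (Finset.mem_singleton_self b))
    have haT : a ∈ T := heT (hecd ▸ Finset.mem_insert_self a {b})
    have hbT : b ∈ T := heT (hecd ▸ Finset.mem_insert_of_mem (Finset.mem_singleton_self b))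
    obtain ⟨hfaT, hfaM, hfane, hffa⟩ := h𝒯M T hT a haT haM
    have hba : b = f a := by
      by_contra hbfa
      obtain ⟨hfbT, hfbM, hfbne, hffb⟩ := h𝒯M T hT b hbT hbM
      have hsub : ({a, f a, b} : Finset V) ⊆ T := by
        intro z hz
        simp only [Finset.mem_insert, Finset.mem_singleton] at hz
        rcases hz with h | h | h
        · exact h ▸ haT
        · exact h ▸ hfaT
        · exact h ▸ hbT
      have hcard : ({a, f a, b} : Finset V).card = 3 := by
        rw [Finset.card_insert_of_notMem, Finset.card_insert_of_notMem, Finset.card_singleton]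
        · simp only [Finset.mem_singleton]
          exact fun h => hbfa h.symm
        · simp only [Finset.mem_insert, Finset.mem_singleton]
          push_neg
          exact ⟨Ne.symm hfane, hab⟩
      have hTeq : T = ({a, f a, b} : Finset V) :=
        (Finset.eq_of_subset_of_card_le hsub (by rw [h𝒯card T hT, hcard])).symm
      have hfbmem : f b ∈ ({a, f a, b} : Finset V) := hTeq ▸ hfbT
      simp only [Finset.mem_insert, Finset.mem_singleton] at hfbmem
      rcases hfbmem with h | h | h
      · exact hbfa (by rw [← hffb, h])
      · exact hab (by rw [← hffa, ← h, hffb])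
      · exact hfbne h
    have : G.Adj a b := hba ▸ (hfM a haM).2.1
    exact hena ⟨a, hecd ▸ Finset.mem_insert_self a {b},
      b, hecd ▸ Finset.mem_insert_of_mem (Finset.mem_singleton_self b), this⟩
  -- degree-2 covers give an injection from P2
  have hP2A : ∀ e ∈ P2, ∃ q, (q ∉ S ∧ ¬ G.Adj x q ∧ q ≠ x ∧
      S.filter (fun a => G.Adj q a) = e) := by
    intro e he
    obtain ⟨hePna, hnT⟩ := Finset.mem_filter.1 he
    obtain ⟨q, ⟨hqS, hnxq, hqx⟩, heq⟩ := hcov e hePna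
    have hec : e.card = 2 := (Finset.mem_powersetCard.1 (Finset.mem_filter.1 hePna).1).2
    have hd2 : 2 ≤ (S.filter (fun a => G.Adj q a)).card := by
      calc 2 = e.card := hec.symm
        _ ≤ _ := Finset.card_le_card heq
    have hd3 : (S.filter (fun a => G.Adj q a)).card ≤ 3 := fact3 q hqx hnxq hqS
    have hdne3 : (S.filter (fun a => G.Adj q a)).card ≠ 3 := by
      intro h3
      apply hnT
      refine ⟨S.filter (fun a => G.Adj q a), ?_, heq⟩
      rw [h𝒯]
      exact Finset.mem_image.2 ⟨q, Finset.mem_filter.2 ⟨Finset.mem_univ q,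
        hqS, hnxq, hqx, h3⟩, rfl⟩
    have hd2' : (S.filter (fun a => G.Adj q a)).card = 2 := by omega
    exact ⟨q, hqS, hnxq, hqx, (Finset.eq_of_subset_of_card_le heq (by omega)).symm⟩
  -- degree-2 covers: injection from P2
  set Acov := Finset.univ.filter (fun q : V => q ∉ S ∧ ¬ G.Adj x q ∧ q ≠ x ∧
    (S.filter (fun a => G.Adj q a)).card = 2) with hAcov
  set gA : Finset V → V := fun e =>
    if h : ∃ q, q ∉ S ∧ ¬ G.Adj x q ∧ q ≠ x ∧ S.filter (fun a => G.Adj q a) = e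
    then h.choose else x with hgA
  have hgAspec : ∀ e ∈ P2, gA e ∉ S ∧ ¬ G.Adj x (gA e) ∧ gA e ≠ x ∧
      S.filter (fun a => G.Adj (gA e) a) = e := by
    intro e he
    obtain ⟨q, hq1, hq2, hq3, hq4⟩ := hP2A e he
    have hex : ∃ q, q ∉ S ∧ ¬ G.Adj x q ∧ q ≠ x ∧ S.filter (fun a => G.Adj q a) = e :=
      ⟨q, hq1, hq2, hq3, hq4⟩
    rw [hgA]
    simp only [dif_pos hex]
    exact hex.choose_spec
  have hP2card : P2.card ≤ Acov.card := by
    apply Finset.card_le_card_of_injOn gA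
    · intro e he
      obtain ⟨h1, h2, h3, h4⟩ := hgAspec e he
      refine Finset.mem_filter.2 ⟨Finset.mem_univ _, h1, h2, h3, ?_⟩
      rw [h4]
      exact (Finset.mem_powersetCard.1
        (Finset.mem_filter.1 (Finset.mem_filter.1 he).1).1).2
    · intro e he e' he' hee
      rw [← (hgAspec e he).2.2.2, ← (hgAspec e' he').2.2.2, hee]
  -- choice of a neighbour of x next to a given vertex
  set ya : V → V := fun v => if h : ∃ y, G.Adj v y ∧ G.Adj x y then h.choose else x with hya
  have hyaspec : ∀ v, v ≠ x → ¬ G.Adj x v → G.Adj v (ya v) ∧ G.Adj x (ya v) := by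
    intro v h1 h2
    have hex := hFN v h1 h2
    rw [hya]
    simp only [dif_pos hex]
    exact hex.choose_spec
  -- representative covers for triples
  set qT : Finset V → V := fun T =>
    if h : ∃ q, q ∈ Bcov ∧ S.filter (fun a => G.Adj q a) = T then h.choose else x with hqT
  have hqTspec : ∀ T ∈ 𝒯, (qT T) ∈ Bcov ∧ S.filter (fun a => G.Adj (qT T) a) = T := by
    intro T hT
    obtain ⟨q, hq, hqeq⟩ := h𝒯rep T hT
    have hex : ∃ q, q ∈ Bcov ∧ S.filter (fun a => G.Adj q a) = T := ⟨q, hq, hqeq⟩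
    rw [hqT]
    simp only [dif_pos hex]
    exact hex.choose_spec
  have hBmem : ∀ q ∈ Bcov, q ∉ S ∧ ¬ G.Adj x q ∧ q ≠ x ∧
      (S.filter (fun a => G.Adj q a)).card = 3 := fun q hq => (Finset.mem_filter.1 hq).2
  -- disjoint pairs from two distinct triples
  have dpairs : ∀ T ∈ 𝒯, ∀ T' ∈ 𝒯, T ≠ T' → ∃ a b c d,
      (a ∈ T ∧ b ∈ T ∧ c ∈ T' ∧ d ∈ T') ∧
      (a ≠ b ∧ c ≠ d ∧ c ≠ a ∧ c ≠ b ∧ d ≠ a ∧ d ≠ b) := by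
    intro T hT T' hT' hTT
    have h3 := h𝒯card T hT
    have h3' := h𝒯card T' hT'
    rcases h𝒯int T hT T' hT' hTT with h0 | h2
    · have hdisj : ∀ z, z ∈ T → z ∉ T' := by
        intro z hz hz'
        have : z ∈ T ∩ T' := Finset.mem_inter.2 ⟨hz, hz'⟩
        rw [Finset.card_eq_zero.1 h0] at this
        exact absurd this (Finset.notMem_empty z)
      obtain ⟨a, ha, b, hb, hab⟩ := pair_of_two (by omega : 2 ≤ T.card)
      obtain ⟨c, hc, d, hd, hcd⟩ := pair_of_two (by omega : 2 ≤ T'.card)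
      exact ⟨a, b, c, d, ⟨ha, hb, hc, hd⟩, hab, hcd,
        fun h => hdisj a ha (h ▸ hc), fun h => hdisj b hb (h ▸ hc),
        fun h => hdisj a ha (h ▸ hd), fun h => hdisj b hb (h ▸ hd)⟩
    · obtain ⟨d₀, e₀, hde, hinter⟩ := Finset.card_eq_two.1 h2
      have hd₀T : d₀ ∈ T := (Finset.mem_inter.1 (hinter ▸ Finset.mem_insert_self d₀ {e₀})).1
      have he₀T' : e₀ ∈ T' := (Finset.mem_inter.1 (hinter ▸ Finset.mem_insert_of_mem
        (Finset.mem_singleton_self e₀))).2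
      have hfcard : (T \ (T ∩ T')).card = 1 := by
        rw [Finset.card_sdiff_of_subset Finset.inter_subset_left, h2, h3]
      have hfcard' : (T' \ (T ∩ T')).card = 1 := by
        rw [Finset.card_sdiff_of_subset Finset.inter_subset_right, h2, h3']
      obtain ⟨fT, hfT⟩ := Finset.card_eq_one.1 hfcard
      obtain ⟨fT', hfT'⟩ := Finset.card_eq_one.1 hfcard'
      have hfTmem : fT ∈ T \ (T ∩ T') := hfT ▸ Finset.mem_singleton_self fT
      have hfTmem' : fT' ∈ T' \ (T ∩ T') := hfT' ▸ Finset.mem_singleton_self fT'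
      obtain ⟨hfT_T, hfT_ni⟩ := Finset.mem_sdiff.1 hfTmem
      obtain ⟨hfT'_T', hfT'_ni⟩ := Finset.mem_sdiff.1 hfTmem'
      have hfT_nT' : fT ∉ T' := fun h => hfT_ni (Finset.mem_inter.2 ⟨hfT_T, h⟩)
      have hfT'_nT : fT' ∉ T := fun h => hfT'_ni (Finset.mem_inter.2 ⟨h, hfT'_T'⟩)
      have hd₀e₀ : d₀ ∈ T ∩ T' ∧ e₀ ∈ T ∩ T' := by
        constructor
        · exact hinter ▸ Finset.mem_insert_self d₀ {e₀}
        · exact hinter ▸ Finset.mem_insert_of_mem (Finset.mem_singleton_self e₀)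
      refine ⟨d₀, fT, e₀, fT', ⟨hd₀T, hfT_T, he₀T', hfT'_T'⟩, ?_, ?_, ?_, ?_, ?_, ?_⟩
      · exact fun h => hfT_ni (h ▸ hd₀e₀.1)
      · exact fun h => hfT'_ni (h ▸ hd₀e₀.2)
      · exact hde.symm
      · exact fun h => hfT_nT' (h ▸ he₀T')
      · exact fun h => hfT'_nT (h ▸ hd₀T)
      · exact fun h => hfT'_nT (h ▸ hfT_T)
  -- counting neighbours of x
  set N := G.neighborFinset x with hN
  set I1 := S.image ya with hI1
  set I2 := 𝒯.image (fun T => ya (qT T)) with hI2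
  have hyaS : ∀ a ∈ S, G.Adj a (ya a) ∧ G.Adj x (ya a) := by
    intro a ha
    obtain ⟨h1, h2⟩ := hSx a ha
    exact hyaspec a h2 h1
  have hyaB : ∀ T ∈ 𝒯, G.Adj (qT T) (ya (qT T)) ∧ G.Adj x (ya (qT T)) := by
    intro T hT
    obtain ⟨h1, h2, h3, _⟩ := hBmem (qT T) (hqTspec T hT).1
    exact hyaspec (qT T) h3 h2
  have hI1N : I1 ⊆ N := by
    intro y hy
    obtain ⟨a, ha, rfl⟩ := Finset.mem_image.1 hy
    exact (SimpleGraph.mem_neighborFinset _ _ _).2 (hyaS a ha).2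
  have hI2N : I2 ⊆ N := by
    intro y hy
    obtain ⟨T, hT, rfl⟩ := Finset.mem_image.1 hy
    exact (SimpleGraph.mem_neighborFinset _ _ _).2 (hyaB T hT).2
  have hI1card : I1.card = s := by
    rw [hI1, Finset.card_image_of_injOn]
    intro a ha a' ha' heq
    by_contra hne
    exact fact1 (ya a) (hyaS a ha).2 a ha a' ha' hne (hyaS a ha).1 (heq ▸ (hyaS a' ha').1)
  have hI2card : I2.card = 𝒯.card := by
    rw [hI2, Finset.card_image_of_injOn]
    intro T hT T' hT' heq
    by_contra hne
    obtain ⟨a, b, c, d, ⟨haT, hbT, hcT, hdT⟩, hab, hcd, hca, hcb, hda, hdb⟩ :=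
      dpairs T hT T' hT' hne
    obtain ⟨hqS, hnxq, hqx, _⟩ := hBmem (qT T) (hqTspec T hT).1
    obtain ⟨hqS', hnxq', hqx', _⟩ := hBmem (qT T') (hqTspec T' hT').1
    have hqq' : qT T ≠ qT T' := by
      intro h
      exact hne (((hqTspec T hT).2).symm.trans (h ▸ (hqTspec T' hT').2))
    have hfa : ∀ z ∈ T, z ∈ S ∧ G.Adj (qT T) z := by
      intro z hz
      have := (hqTspec T hT).2 ▸ hz
      exact ⟨(Finset.mem_filter.1 this).1, (Finset.mem_filter.1 this).2⟩
    have hfc : ∀ z ∈ T', z ∈ S ∧ G.Adj (qT T') z := by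
      intro z hz
      have := (hqTspec T' hT').2 ▸ hz
      exact ⟨(Finset.mem_filter.1 this).1, (Finset.mem_filter.1 this).2⟩
    refine hg {a, b, c, d} (by simp [Finset.insert_subset_iff, (hfa a haT).1, (hfa b hbT).1,
        (hfc c hcT).1, (hfc d hdT).1]) ((cle4 a b c d).trans (by norm_num))
      (g_twopairs hab hcd hca hcb hda hdb
        (fun h => hqS (by rw [← h]; exact (hfc c hcT).1))
        (fun h => hqS (by rw [← h]; exact (hfc d hdT).1)) hqq'
        (hfa a haT).2.symm (hfa b hbT).2.symm (hfc c hcT).2.symm (hfc d hdT).2.symm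
        (hyaB T hT).1 (by
          have h2 := (hyaB T' hT').1
          simp only at heq
          rw [← heq] at h2
          exact h2) (hyaB T hT).2 ?_ ?_ ?_ ?_) <;>
      simp [hab, hca, hcb, hda, hdb, hcd]
  have hI12 : Disjoint I1 I2 := by
    rw [Finset.disjoint_left]
    intro y hy1 hy2
    obtain ⟨a, ha, hya1⟩ := Finset.mem_image.1 hy1
    obtain ⟨T, hT, hya2⟩ := Finset.mem_image.1 hy2
    obtain ⟨hqS, hnxq, hqx, _⟩ := hBmem (qT T) (hqTspec T hT).1
    have h2e : 2 ≤ (T.erase a).card := by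
      have h3 := h𝒯card T hT
      by_cases haT : a ∈ T
      · rw [Finset.card_erase_of_mem haT]; omega
      · rw [Finset.erase_eq_self.2 haT]; omega
    obtain ⟨b, hb1, c, hc1, hbc⟩ := pair_of_two h2e
    obtain ⟨hba, hbT⟩ := Finset.mem_erase.1 hb1
    obtain ⟨hca', hcT⟩ := Finset.mem_erase.1 hc1
    have hfb : ∀ z ∈ T, z ∈ S ∧ G.Adj (qT T) z := by
      intro z hz
      have := (hqTspec T hT).2 ▸ hz
      exact ⟨(Finset.mem_filter.1 this).1, (Finset.mem_filter.1 this).2⟩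
    refine hg {b, c, a} (by simp [Finset.insert_subset_iff, (hfb b hbT).1, (hfb c hcT).1, ha])
      ((cle3 b c a).trans (by norm_num))
      (g_pairplus hbc (hfb b hbT).2.symm (hfb c hcT).2.symm (Ne.symm hba) (Ne.symm hca')
        (fun h => hqS (by rw [← h]; exact ha))
        (hya2 ▸ (hyaB T hT).1) (hya1 ▸ (hyaS a ha).1) (hya1 ▸ (hyaS a ha).2) ?_ ?_ ?_) <;>
      simp [hbc, hba, hca']
  have hNcard : s + 𝒯.card ≤ N.card := by
    have hsub : I1 ∪ I2 ⊆ N := Finset.union_subset hI1N hI2N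
    calc s + 𝒯.card = I1.card + I2.card := by rw [hI1card, hI2card]
      _ = (I1 ∪ I2).card := (Finset.card_union_of_disjoint hI12).symm
      _ ≤ N.card := Finset.card_le_card hsub
  -- counting the rest of the graph
  set Fs := Finset.univ.filter (fun q : V => q ≠ x ∧ ¬ G.Adj x q) with hFs
  set I3 := 𝒯.image qT with hI3
  have hSFs : S ⊆ Fs := by
    intro a ha
    exact Finset.mem_filter.2 ⟨Finset.mem_univ _, (hSx a ha).2, (hSx a ha).1⟩
  have hAFs : Acov ⊆ Fs := by
    intro q hq
    obtain ⟨_, h1, h2, h3, _⟩ := Finset.mem_filter.1 hq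
    exact Finset.mem_filter.2 ⟨Finset.mem_univ _, h3, h2⟩
  have hI3Fs : I3 ⊆ Fs := by
    intro q hq
    obtain ⟨T, hT, rfl⟩ := Finset.mem_image.1 hq
    obtain ⟨_, h2, h3, _⟩ := hBmem (qT T) (hqTspec T hT).1
    exact Finset.mem_filter.2 ⟨Finset.mem_univ _, h3, h2⟩
  have hI3card : I3.card = 𝒯.card := by
    rw [hI3, Finset.card_image_of_injOn]
    intro T hT T' hT' heq
    rw [← (hqTspec T hT).2, ← (hqTspec T' hT').2, heq]
  have hSA : Disjoint S Acov := by
    rw [Finset.disjoint_left]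
    intro a ha ha'
    exact (Finset.mem_filter.1 ha').2.1 ha
  have hSI3 : Disjoint S I3 := by
    rw [Finset.disjoint_left]
    intro a ha ha'
    obtain ⟨T, hT, hq⟩ := Finset.mem_image.1 ha'
    exact (hBmem (qT T) (hqTspec T hT).1).1 (hq ▸ ha)
  have hAI3 : Disjoint Acov I3 := by
    rw [Finset.disjoint_left]
    intro q hq hq'
    obtain ⟨T, hT, hqeq⟩ := Finset.mem_image.1 hq'
    have h2 := (Finset.mem_filter.1 hq).2.2.2.2
    have h3 := (hBmem (qT T) (hqTspec T hT).1).2.2.2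
    rw [hqeq] at h3
    omega
  have hFscard : s + Acov.card + 𝒯.card ≤ Fs.card := by
    have hsub : S ∪ (Acov ∪ I3) ⊆ Fs :=
      Finset.union_subset hSFs (Finset.union_subset hAFs hI3Fs)
    have hd1 : Disjoint S (Acov ∪ I3) := Finset.disjoint_union_right.2 ⟨hSA, hSI3⟩
    calc s + Acov.card + 𝒯.card = S.card + (Acov.card + I3.card) := by rw [hI3card]; omega
      _ = S.card + (Acov ∪ I3).card := by rw [Finset.card_union_of_disjoint hAI3]
      _ = (S ∪ (Acov ∪ I3)).card := (Finset.card_union_of_disjoint hd1).symm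
      _ ≤ Fs.card := Finset.card_le_card hsub
  -- the whole vertex set
  have hVcard : Fintype.card V = N.card + Fs.card + 1 := by
    have hxN : x ∉ N := by simp [hN]
    have hxFs : x ∉ Fs := by simp [hFs]
    have hNF : Disjoint N Fs := by
      rw [Finset.disjoint_left]
      intro v hv hv'
      exact (Finset.mem_filter.1 hv').2.2 ((SimpleGraph.mem_neighborFinset _ _ _).1 hv)
    have huniv : Finset.univ = insert x (N ∪ Fs) := by
      apply Finset.eq_of_subset_of_card_le
      · intro v _
        by_cases hvx : v = x
        · exact hvx ▸ Finset.mem_insert_self _ _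
        · by_cases hadj : G.Adj x v
          · exact Finset.mem_insert_of_mem (Finset.mem_union_left _
              ((SimpleGraph.mem_neighborFinset _ _ _).2 hadj))
          · exact Finset.mem_insert_of_mem (Finset.mem_union_right _
              (Finset.mem_filter.2 ⟨Finset.mem_univ _, hvx, hadj⟩))
      · exact Finset.card_le_univ _
    rw [← Finset.card_univ, huniv, Finset.card_insert_of_notMem (by
        simp only [Finset.mem_union]
        push_neg
        exact ⟨hxN, hxFs⟩),
      Finset.card_union_of_disjoint hNF]
  -- final arithmetic
  have hTS : (𝒯.biUnion id \ M).card + M.card ≤ s := by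
    have hsub : 𝒯.biUnion id \ M ⊆ S \ M := by
      apply Finset.sdiff_subset_sdiff _ le_rfl
      intro z hz
      obtain ⟨T, hT, hzT⟩ := Finset.mem_biUnion.1 hz
      exact h𝒯S T hT hzT
    have hMsub : M ⊆ S := Finset.filter_subset _ _
    have := Finset.card_sdiff_add_card_eq_card hMsub
    calc (𝒯.biUnion id \ M).card + M.card ≤ (S \ M).card + M.card := by
          have := Finset.card_le_card hsub; omega
      _ = s := this
  have hP3Una : P3.card ≤ Una.card := Finset.card_le_card hP3U
  have hch := two_choose s
  have hform : (s + 1)^2 = s * (s - 1) + 3 * s + 1 := by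
    cases s with
    | zero => norm_num
    | succ m =>
      simp only [Nat.add_sub_cancel]
      ring
  rw [hform]
  set t := s * (s - 1) with ht
  omega






end
section
variable {V : Type*} [Fintype V] [DecidableEq V] {G : SimpleGraph V}

lemma core_membership' (G : SimpleGraph V) (hconn : G.Connected) (hdiam : G.diam = 2) :
    ∀ p : V → ℕ, ∑ v, p v = (Nat.sqrt (2 * Fintype.card V - 1) + 5) →
      ∀ x, RubblingReachable G p x := by
  classical
  intro p hsum x
  by_contra hreach
  have hFN : ∀ v, v ≠ x → ¬ G.Adj x v → ∃ y, G.Adj v y ∧ G.Adj x y := by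
    intro v hv hnv
    exact common_nbr_of_diam_two hconn hdiam hv (fun h => hnv h.symm)
  have hpx : p x = 0 := by
    by_contra h
    exact hreach ⟨p, Relation.ReflTransGen.refl, by omega⟩
  have hnot2 : ∀ r₁ r₂ : V → ℕ, (∀ v, r₁ v + r₂ v ≤ p v) →
      NProd G x r₁ → NProd G x r₂ → False :=
    fun r₁ r₂ hle h1 h2 => hreach (two_prod hle h1 h2)
  -- either remove one small production, or there is none at all
  obtain ⟨r, hrle, hrsum, hrcond⟩ : ∃ r : V → ℕ, (∀ v, r v ≤ p v) ∧ (∑ v, r v) ≤ 5 ∧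
      (∀ r' : V → ℕ, (∀ v, r' v ≤ p v - r v) → (∑ v, r' v) ≤ 5 → ¬ NProd G x r') := by
    by_cases hP : ∃ r : V → ℕ, (∀ v, r v ≤ p v) ∧ (∑ v, r v) ≤ 5 ∧ NProd G x r
    · obtain ⟨r, h1, h2, h3⟩ := hP
      refine ⟨r, h1, h2, fun r' hle _ hN => hnot2 r r' (fun v => ?_) h3 hN⟩
      have := hle v
      have := h1 v
      omega
    · push_neg at hP
      refine ⟨fun _ => 0, fun v => Nat.zero_le _, by simp, fun r' hle hsz hN => ?_⟩
      exact hP r' (fun v => by have := hle v; omega) hsz hN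
  set p' : V → ℕ := fun v => p v - r v with hp'
  have hps : ∀ v, p' v + r v = p v := by
    intro v
    have := hrle v
    simp only [hp']
    omega
  have hsum' : (∑ v, p' v) + (∑ v, r v) = ∑ v, p v := by
    rw [← Finset.sum_add_distrib]
    exact Finset.sum_congr rfl (fun v _ => hps v)
  have hsqle : Nat.sqrt (2 * Fintype.card V - 1) ≤ ∑ v, p' v := by
    rw [hsum] at hsum'
    omega
  -- p' has no pebbles on x or N(x), and at most one pebble anywhere else
  have hp'x : p' x = 0 := by
    have := hrle x
    simp only [hp']
    omega
  have hp'N : ∀ y, G.Adj x y → p' y = 0 := by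
    intro y hy
    by_contra h
    refine hrcond (fun v => if v = y then 1 else 0) (fun v => ?_) (by simp)
      (g_onN hy (by simp))
    by_cases hv : v = y
    · subst hv
      simp only [hp'] at h
      simp
      omega
    · simp [hv]
  have hp'2 : ∀ v, p' v ≤ 1 := by
    intro v
    by_cases hvx : v = x
    · rw [hvx, hp'x]; omega
    by_cases hadj : G.Adj x v
    · rw [hp'N v hadj]; omega
    by_contra h
    obtain ⟨y, hvy, hxy⟩ := hFN v hvx hadj
    refine hrcond (fun z => if z = v then 2 else 0) (fun z => ?_) (by simp)
      (g_heavy hvy hxy (by simp))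
    by_cases hz : z = v
    · subst hz
      simp only [hp'] at h
      simp
      omega
    · simp [hz]
  set S := Finset.univ.filter (fun v => 1 ≤ p' v) with hS
  have hSval : ∀ v ∈ S, p' v = 1 := by
    intro v hv
    have h1 := (Finset.mem_filter.1 hv).2
    have h2 := hp'2 v
    omega
  have hScard : ∑ v, p' v = S.card := by
    rw [show ∑ v, p' v = ∑ v ∈ S, p' v from
      (Finset.sum_subset (Finset.subset_univ S) (fun v _ hv => by
        have : ¬ 1 ≤ p' v := fun h => hv (Finset.mem_filter.2 ⟨Finset.mem_univ _, h⟩)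
        omega)).symm]
    rw [Finset.sum_congr rfl hSval]
    simp
  have hSx : ∀ a ∈ S, ¬ G.Adj x a ∧ a ≠ x := by
    intro a ha
    have h1 := (Finset.mem_filter.1 ha).2
    constructor
    · intro hadj
      rw [hp'N a hadj] at h1
      omega
    · intro hax
      rw [hax, hp'x] at h1
      omega
  have hg : ∀ D : Finset V, D ⊆ S → D.card ≤ 5 →
      ¬ NProd G x (fun v => if v ∈ D then (1:ℕ) else 0) := by
    intro D hD hDcard
    refine hrcond _ (fun v => ?_) ?_
    · by_cases hv : v ∈ D
      · have := hSval v (hD hv)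
        simp only [if_pos hv, hp'] at this ⊢
        omega
      · simp [hv]
    · rw [Finset.sum_ite_mem, Finset.univ_inter, Finset.sum_const, smul_eq_mul, mul_one]
      exact hDcard
  have hcore := core_count hconn hdiam x S hSx hg
  have hlt := Nat.lt_succ_sqrt (2 * Fintype.card V - 1)
  have hmono : (Nat.sqrt (2 * Fintype.card V - 1) + 1)^2 ≤ (S.card + 1)^2 := by
    apply Nat.pow_le_pow_left
    rw [← hScard]
    omega
  have : (Nat.sqrt (2 * Fintype.card V - 1) + 1)^2
      = (Nat.sqrt (2 * Fintype.card V - 1)).succ * (Nat.sqrt (2 * Fintype.card V - 1)).succ := by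
    rw [Nat.succ_eq_add_one]
    ring
  omega

end


lemma core_membership {V : Type*} [Fintype V] (G : SimpleGraph V)
    (hconn : G.Connected) (hdiam : G.diam = 2) :
    (Nat.sqrt (2 * Fintype.card V - 1) + 5) ∈
      {m | ∀ p : V → ℕ, ∑ v, p v = m → ∀ x, RubblingReachable G p x} := by
  classical
  exact core_membership' G hconn hdiam

/-- The rubbling number of a connected diameter-2 graph with `n` vertices is at most
`√(2n - 1) + 5`. -/
theorem rubblingNumber_le_of_diam_two {V : Type*} [Fintype V] (G : SimpleGraph V)
    (hconn : G.Connected) (hdiam : G.diam = 2) (n : ℕ) (hn : Fintype.card V = n) :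
    (rubblingNumber G : ℝ) ≤ Real.sqrt (2 * n - 1) + 5 := by
  subst hn
  set n := Fintype.card V with hn
  have : Nonempty V := hconn.nonempty
  have hn1 : 1 ≤ n := Fintype.card_pos
  have hmem := core_membership G hconn hdiam
  have h1 : rubblingNumber G ≤ Nat.sqrt (2 * n - 1) + 5 := Nat.sInf_le hmem
  have h2 : ((Nat.sqrt (2 * n - 1) : ℝ)) ≤ Real.sqrt (2 * n - 1) := by
    have : ((Nat.sqrt (2 * n - 1) : ℝ)) ≤ Real.sqrt ((2 * n - 1 : ℕ) : ℝ) := by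
      rw [Real.le_sqrt (by positivity)]
      · exact_mod_cast Nat.sqrt_le' _
      · exact_mod_cast Nat.zero_le _
    refine this.trans (Real.sqrt_le_sqrt ?_)
    have : ((2 * n - 1 : ℕ) : ℝ) = 2 * n - 1 := by
      have : (1:ℕ) ≤ 2 * n := by omega
      push_cast [Nat.cast_sub this]
      ring
    rw [this]
  calc (rubblingNumber G : ℝ) ≤ ((Nat.sqrt (2 * n - 1) + 5 : ℕ) : ℝ) := by exact_mod_cast h1
    _ = (Nat.sqrt (2 * n - 1) : ℝ) + 5 := by push_cast; ring
    _ ≤ Real.sqrt (2 * n - 1) + 5 := by linarith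
end

section
/- If G is a tree with n vertices, then the optimal rubbling number satisfies ρ_opt(G) ≤ ⌈(n + 1)/2⌉. -/
open Finset

variable {V : Type*}

/-!
A longest path `a - w - x - ⋯` in a tree starts at a leaf `a`, and every neighbour of `w` other
than `x` is a leaf. If `w` has a second leaf `y`, delete `a` and `y` and put one more pebble on
`w`: with the pebble that reaches `w` it can be moved to `a` or to `y`. Otherwise `w` has
degree two; delete `a` and `w` and put a pebble on `a`: with the pebble that reaches `x` it
rubbles onto `w`. Each step deletes two vertices at the cost of one pebble, and trees with at
most two vertices need one pebble per vertex.
-/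

section Moves

variable {G : SimpleGraph V} {p q : V → ℕ} {u v w x : V}

lemma IsRubblingMove.add_right (h : IsRubblingMove G p q) (c : V → ℕ) :
    IsRubblingMove G (p + c) (q + c) := by
  rcases h with ⟨v, u, hadj, hv, hqv, hqu, hrest⟩ |
    ⟨v, w, u, hvw, hv, hw, hpv, hpw, hqv, hqw, hqu, hrest⟩
  · refine Or.inl ⟨v, u, hadj, ?_, ?_, ?_, fun z hzv hzu => ?_⟩
    any_goals simp only [Pi.add_apply, hqv, hqu]; omega
    simp only [Pi.add_apply, hrest z hzv hzu]
  · refine Or.inr ⟨v, w, u, hvw, hv, hw, ?_, ?_, ?_, ?_, ?_, fun z hzv hzw hzu => ?_⟩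
    any_goals simp only [Pi.add_apply, hqv, hqw, hqu]; omega
    simp only [Pi.add_apply, hrest z hzv hzw hzu]

lemma IsRubblingMove.reflTransGen_add_right (h : Relation.ReflTransGen (IsRubblingMove G) p q)
    (c : V → ℕ) : Relation.ReflTransGen (IsRubblingMove G) (p + c) (q + c) :=
  h.lift (· + c) fun _ _ h => IsRubblingMove.add_right h c

lemma RubblingReachable.add_right (h : RubblingReachable G p x) (c : V → ℕ) :
    RubblingReachable G (p + c) x := by
  obtain ⟨q, hpq, hq⟩ := h
  refine ⟨q + c, IsRubblingMove.reflTransGen_add_right hpq c, ?_⟩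
  simp only [Pi.add_apply]
  omega

lemma rubblingReachable_of_pos (h : 1 ≤ p x) : RubblingReachable G p x :=
  ⟨p, .refl, h⟩

variable [DecidableEq V]

lemma exists_isPebblingMove (h : G.Adj v u) (hv : 2 ≤ p v) :
    ∃ q, IsPebblingMove G p q ∧ q u = p u + 1 :=
  ⟨Function.update (Function.update p v (p v - 2)) u (p u + 1),
    ⟨v, u, h, hv, by simp [h.ne], by simp, fun z hzv hzu => by simp [hzv, hzu]⟩, by simp⟩

lemma exists_isStrictRubblingMove (hvw : v ≠ w) (hv : G.Adj v u) (hw : G.Adj w u)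
    (hpv : 1 ≤ p v) (hpw : 1 ≤ p w) : ∃ q, IsStrictRubblingMove G p q ∧ q u = p u + 1 :=
  ⟨Function.update (Function.update (Function.update p v (p v - 1)) w (p w - 1)) u (p u + 1),
    ⟨v, w, u, hvw, hv, hw, hpv, hpw, by simp [hv.ne, hvw], by simp [hw.ne], by simp,
      fun z hzv hzw hzu => by simp [hzv, hzw, hzu]⟩, by simp⟩

lemma RubblingReachable.add_single_of_adj (hw : RubblingReachable G p w) (h : G.Adj w u) :
    RubblingReachable G (p + Pi.single w 1) u := by
  obtain ⟨q, hpq, hq⟩ := hw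
  obtain ⟨q', hmove, hq'⟩ := exists_isPebblingMove (p := q + Pi.single w 1) h (by simp; omega)
  exact ⟨q', (IsRubblingMove.reflTransGen_add_right hpq _).tail (Or.inl hmove), by omega⟩

lemma RubblingReachable.add_single_of_adj_of_adj (hx : RubblingReachable G p x) (hvx : v ≠ x)
    (hv : G.Adj v w) (hxw : G.Adj x w) : RubblingReachable G (p + Pi.single v 1) w := by
  obtain ⟨q, hpq, hq⟩ := hx
  obtain ⟨q', hmove, hq'⟩ := exists_isStrictRubblingMove (p := q + Pi.single v 1) hvx hv hxw
    (by simp) (by simp [hvx.symm]; omega)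
  exact ⟨q', (IsRubblingMove.reflTransGen_add_right hpq _).tail (Or.inr hmove), by omega⟩

lemma forall_rubblingReachable_of_erase_erase_of_adj {S : Finset V} {a y : V}
    (h : ∀ z ∈ (S.erase a).erase y, RubblingReachable G p z) (hw : w ∈ (S.erase a).erase y)
    (hwa : G.Adj w a) (hwy : G.Adj w y) : ∀ z ∈ S, RubblingReachable G (p + Pi.single w 1) z := by
  intro z hz
  by_cases hza : z = a
  · exact hza ▸ (h w hw).add_single_of_adj hwa
  by_cases hzy : z = y
  · exact hzy ▸ (h w hw).add_single_of_adj hwy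
  exact (h z (by simp [hza, hzy, hz])).add_right _

lemma forall_rubblingReachable_of_erase_erase_of_adj_of_adj {S : Finset V} {a : V}
    (h : ∀ z ∈ (S.erase a).erase w, RubblingReachable G p z) (hx : x ∈ (S.erase a).erase w)
    (hax : a ≠ x) (haw : G.Adj a w) (hwx : G.Adj w x) :
    ∀ z ∈ S, RubblingReachable G (p + Pi.single a 1) z := by
  intro z hz
  by_cases hza : z = a
  · exact rubblingReachable_of_pos (by simp [hza])
  by_cases hzw : z = w
  · exact hzw ▸ (h x hx).add_single_of_adj_of_adj hax haw hwx.symm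
  exact (h z (by simp [hza, hzw, hz])).add_right _

end Moves

namespace SimpleGraph

variable {G : SimpleGraph V} {S : Finset V}

namespace Walk

variable {a b : V}

def IsPathIn (q : G.Walk a b) (S : Finset V) : Prop :=
  q.IsPath ∧ ∀ v ∈ q.support, v ∈ S

def IsLongestPathIn (q : G.Walk a b) (S : Finset V) : Prop :=
  q.IsPathIn S ∧ ∀ c d (r : G.Walk c d), r.IsPathIn S → r.length ≤ q.length

lemma IsPathIn.length_lt_card {q : G.Walk a b} (hq : q.IsPathIn S) : q.length < #S := by
  classical
  have hcard : q.support.toFinset.card = q.length + 1 := by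
    rw [List.toFinset_card_of_nodup hq.1.support_nodup, length_support]
  have := Finset.card_le_card fun v hv => hq.2 v (List.mem_toFinset.mp hv)
  omega

lemma IsLongestPathIn.eq_snd_of_adj (hG : G.IsAcyclic) {q : G.Walk a b}
    (hq : q.IsLongestPathIn S) {y : V} (hy : y ∈ S) (hadj : G.Adj a y) : y = q.snd := by
  by_cases hmem : y ∈ q.support
  · exact hG.eq_snd_of_adj_start hq.1.1 hadj hmem
  · have hext : (cons hadj.symm q).IsPathIn S :=
      ⟨hq.1.1.cons hmem, by simpa [support_cons, hy] using hq.1.2⟩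
    have := hq.2 _ _ _ hext
    simp at this

end Walk

open Walk

def PathConnectedOn (G : SimpleGraph V) (S : Finset V) : Prop :=
  ∀ a ∈ S, ∀ b ∈ S, ∃ q : G.Walk a b, q.IsPathIn S

/-- An `S`-path enters and leaves each of its inner vertices through two distinct
`S`-neighbours. -/
lemma PathConnectedOn.erase [DecidableEq V] {u w : V} (hS : G.PathConnectedOn S)
    (hu : ∀ y ∈ S, G.Adj u y → y = w) : G.PathConnectedOn (S.erase u) := by
  intro a ha b hb
  obtain ⟨q, hpath, hqS⟩ := hS a (mem_of_mem_erase ha) b (mem_of_mem_erase hb)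
  refine ⟨q, hpath, fun v hv => mem_erase.mpr ⟨?_, hqS v hv⟩⟩
  rintro rfl
  obtain ⟨i, rfl, hi⟩ := mem_support_iff_exists_getVert.mp hv
  have hi0 : i ≠ 0 := by rintro rfl; simp at ha
  have hil : i ≠ q.length := by rintro rfl; simp at hb
  have hprev := hu _ (hqS _ (q.getVert_mem_support (i - 1)))
    (by simpa [Nat.sub_add_cancel (Nat.pos_of_ne_zero hi0)] using
      (q.adj_getVert_succ (i := i - 1) (by omega)).symm)
  have hnext := hu _ (hqS _ (q.getVert_mem_support (i + 1))) (q.adj_getVert_succ (by omega))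
  have := hpath.getVert_injOn (by simp; omega) (by simp; omega) (hprev.trans hnext.symm)
  omega

lemma PathConnectedOn.exists_isPathIn_two_le_length (hS : G.PathConnectedOn S) (hS3 : 2 < #S) :
    ∃ (a b : V) (q : G.Walk a b), q.IsPathIn S ∧ 2 ≤ q.length := by
  obtain ⟨c, y, z, hc, hy, hz, hcy, hcz, hyz⟩ := Finset.two_lt_card_iff.mp hS3
  obtain ⟨qy, hqy⟩ := hS c hc y hy
  obtain ⟨qz, hqz⟩ := hS c hc z hz
  by_cases hlen : 2 ≤ qy.length ∨ 2 ≤ qz.length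
  · rcases hlen with h | h
    exacts [⟨c, y, qy, hqy, h⟩, ⟨c, z, qz, hqz, h⟩]
  have hcy' := qy.adj_of_length_eq_one (by have := mt qy.eq_of_length_eq_zero hcy; omega)
  have hcz' := qz.adj_of_length_eq_one (by have := mt qz.eq_of_length_eq_zero hcz; omega)
  refine ⟨y, z, cons hcy'.symm (cons hcz' nil), ⟨?_, ?_⟩, by simp⟩
  · simp [hcy.symm, hcz, hyz]
  · simp [hy, hc, hz]

lemma PathConnectedOn.exists_isLongestPathIn (hS : G.PathConnectedOn S) (hS3 : 2 < #S) :
    ∃ (a b : V) (q : G.Walk a b), q.IsLongestPathIn S ∧ 2 ≤ q.length := by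
  classical
  let HasPath (k : ℕ) : Prop := ∃ (a b : V) (q : G.Walk a b), q.IsPathIn S ∧ q.length = k
  obtain ⟨a, b, q, hq, hq2⟩ := hS.exists_isPathIn_two_le_length hS3
  have hq' : HasPath q.length := ⟨a, b, q, hq, rfl⟩
  obtain ⟨a', b', q', hq'S, hlen⟩ := Nat.findGreatest_spec hq.length_lt_card.le hq'
  refine ⟨a', b', q', ⟨hq'S, fun c d r hr => ?_⟩, ?_⟩
  · exact hlen ▸ Nat.le_findGreatest hr.length_lt_card.le ⟨c, d, r, hr, rfl⟩
  · exact hq2.trans (hlen ▸ Nat.le_findGreatest hq.length_lt_card.le hq')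

/-- Along a longest `S`-path `a - w - x - ⋯`, every `S`-neighbour `y ≠ x` of `w` starts another
longest `S`-path `y - w - x - ⋯`, so `w` is the only `S`-neighbour of `y`. -/
lemma PathConnectedOn.exists_adj_adj_forall_leaf (hG : G.IsAcyclic)
    (hS : G.PathConnectedOn S) (hS3 : 2 < #S) :
    ∃ a w x, a ∈ S ∧ w ∈ S ∧ x ∈ S ∧ a ≠ x ∧ G.Adj a w ∧ G.Adj w x ∧
      ∀ y ∈ S, G.Adj w y → y ≠ x → ∀ z ∈ S, G.Adj y z → z = w := by
  obtain ⟨a, b, q, hq, hlen⟩ := hS.exists_isLongestPathIn hS3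
  obtain _ | ⟨haw, _ | ⟨hwx, r⟩⟩ := q
  · simp at hlen
  · simp at hlen
  rename_i w x
  have hwxr : (cons hwx r).IsPath := hq.1.1.of_cons
  have hmem (v) (hv : v ∈ (cons hwx r).support) : v ∈ S := hq.1.2 v (by simp_all)
  have hax : a ≠ x := by
    rintro rfl
    exact ((cons_isPath_iff _ _).mp hq.1.1).2 (by simp)
  refine ⟨a, w, x, hq.1.2 a (by simp), hmem w (by simp), hmem x (by simp), hax, haw, hwx, ?_⟩
  intro y hy hwy hyx z hz hyz
  have hyr : y ∉ (cons hwx r).support := fun h =>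
    hyx (by simpa using hG.eq_snd_of_adj_start hwxr hwy h)
  have hlong : (cons hwy.symm (cons hwx r)).IsLongestPathIn S :=
    ⟨⟨hwxr.cons hyr, by simpa [hy] using hmem⟩, fun c d r' hr' => by
      simpa using hq.2 c d r' hr'⟩
  simpa using hlong.eq_snd_of_adj hG hz hyz

lemma PathConnectedOn.exists_erase_erase [DecidableEq V] (hG : G.IsAcyclic)
    (hS : G.PathConnectedOn S) (hS3 : 2 < #S) :
    ∃ a b c, a ∈ S ∧ b ∈ S ∧ a ≠ b ∧ G.PathConnectedOn ((S.erase a).erase b) ∧ ∀ p : V → ℕ,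
        (∀ z ∈ (S.erase a).erase b, RubblingReachable G p z) →
          ∀ z ∈ S, RubblingReachable G (p + Pi.single c 1) z := by
  obtain ⟨a, w, x, ha, hw, hx, hax, haw, hwx, hleaf⟩ := hS.exists_adj_adj_forall_leaf hG hS3
  have hSa := hS.erase (hleaf a ha haw.symm hax)
  by_cases hy : ∃ y ∈ S, G.Adj w y ∧ y ≠ a ∧ y ≠ x
  · obtain ⟨y, hy, hwy, hya, hyx⟩ := hy
    have hw' : w ∈ (S.erase a).erase y := by simp [hw, hwy.ne, haw.ne']
    exact ⟨a, y, w, ha, hy, hya.symm,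
      hSa.erase fun z hz => hleaf y hy hwy hyx z (mem_of_mem_erase hz),
      fun p hp => forall_rubblingReachable_of_erase_erase_of_adj hp hw' haw.symm hwy⟩
  · push Not at hy
    have hx' : x ∈ (S.erase a).erase w := by simp [hx, hax.symm, hwx.ne']
    exact ⟨a, w, a, ha, hw, haw.ne,
      hSa.erase fun z hz hwz => hy z (mem_of_mem_erase hz) hwz (ne_of_mem_erase hz),
      fun p hp => forall_rubblingReachable_of_erase_erase_of_adj_of_adj hp hx' hax haw hwx⟩

lemma PathConnectedOn.exists_rubblingReachable [Fintype V] (hG : G.IsAcyclic)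
    (hS : G.PathConnectedOn S) :
    ∃ p : V → ℕ, ∑ v, p v ≤ (#S + 2) / 2 ∧ ∀ x ∈ S, RubblingReachable G p x := by
  classical
  induction S using Finset.strongInduction with
  | H S ih =>
  by_cases hS2 : #S ≤ 2
  · refine ⟨fun v => if v ∈ S then 1 else 0, ?_,
      fun x hx => rubblingReachable_of_pos (by simp [hx])⟩
    simp only [sum_boole, filter_mem_eq_inter, univ_inter, Nat.cast_id]
    omega
  obtain ⟨a, b, c, ha, hb, hab, hS', hextend⟩ := hS.exists_erase_erase hG (by omega)
  have hb' : b ∈ S.erase a := mem_erase.mpr ⟨hab.symm, hb⟩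
  obtain ⟨p, hp, hreach⟩ := ih _ ((erase_ssubset hb').trans (erase_ssubset ha)) hS'
  have hcard : #((S.erase a).erase b) + 2 = #S := by
    rw [card_erase_of_mem hb', card_erase_of_mem ha]
    omega
  refine ⟨p + Pi.single c 1, ?_, hextend p hreach⟩
  simp only [Pi.add_apply, sum_add_distrib, sum_pi_single', mem_univ, if_true]
  omega

end SimpleGraph

lemma optimalRubblingNumber_le_sum [Fintype V] {G : SimpleGraph V} {p : V → ℕ}
    (h : ∀ x, RubblingReachable G p x) : optimalRubblingNumber G ≤ ∑ v, p v :=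
  Nat.sInf_le ⟨p, rfl, h⟩

/-- If `G` is a tree with `n` vertices, then `ρ_opt(G) ≤ ⌈(n + 1)/2⌉`. -/
theorem optimalRubblingNumber_tree_le {V : Type*} [Fintype V] (G : SimpleGraph V)
    (hconn : G.Connected) (hacyclic : G.IsAcyclic) (n : ℕ) (hn : Fintype.card V = n) :
    optimalRubblingNumber G ≤ (n + 1 + 1) / 2 := by
  have hconnOn : G.PathConnectedOn univ := fun a _ b _ =>
    (hconn.exists_isPath a b).imp fun _ hq => ⟨hq, fun v _ => mem_univ v⟩
  obtain ⟨p, hp, hreach⟩ := hconnOn.exists_rubblingReachable hacyclic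
  rw [card_univ, hn] at hp
  exact (optimalRubblingNumber_le_sum fun x => hreach x (mem_univ x)).trans hp
end

section
/- Let G be a simple connected graph, let v₀ be a vertex of G, and let D = max_{w ∈ V(G)} dist(v₀, w). Let P be the path graph with vertices u₀, u₁, …, u_D, where u_i is adjacent to u_{i+1}. Given a pebble distribution p on G, define the pebble distribution q on P by q(u_i) = Σ_{w : dist(v₀,w) = i} p(w). If a vertex x of G is reachable from p in G by rubbling moves, then the vertex u_{dist(v₀,x)} of P is reachable from q in P by rubbling moves. -/
open Finset

variable {V : Type*}

/- ### Auxiliary material for the proof -/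

private lemma sum_change2 [DecidableEq V] (S : Finset V) (f g : V → ℕ)
    (v u : V) (hvu : v ≠ u) (h : ∀ z, z ≠ v → z ≠ u → g z = f z) :
    ∑ z ∈ S, g z + ((if v ∈ S then f v else 0) + (if u ∈ S then f u else 0))
      = ∑ z ∈ S, f z + ((if v ∈ S then g v else 0) + (if u ∈ S then g u else 0)) := by
  have hsub : ∀ (t : V → ℕ), ∑ z ∈ S ∩ ({v, u} : Finset V), t z
      = (if v ∈ S then t v else 0) + (if u ∈ S then t u else 0) := by
    intro t
    rw [Finset.inter_comm, ← Finset.sum_ite_mem, Finset.sum_pair hvu]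
  have e1 : ∑ z ∈ S, g z = ∑ z ∈ S ∩ ({v,u} : Finset V), g z + ∑ z ∈ S \ ({v,u} : Finset V), g z :=
    (Finset.sum_inter_add_sum_sdiff S _ g).symm
  have e2 : ∑ z ∈ S, f z = ∑ z ∈ S ∩ ({v,u} : Finset V), f z + ∑ z ∈ S \ ({v,u} : Finset V), f z :=
    (Finset.sum_inter_add_sum_sdiff S _ f).symm
  have hdiff : ∑ z ∈ S \ ({v,u} : Finset V), g z = ∑ z ∈ S \ ({v,u} : Finset V), f z := by
    refine Finset.sum_congr rfl fun z hz => ?_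
    simp only [Finset.mem_sdiff, Finset.mem_insert, Finset.mem_singleton] at hz
    exact h z (fun hh => hz.2 (Or.inl hh)) (fun hh => hz.2 (Or.inr hh))
  rw [e1, e2, hsub, hsub]
  omega

private lemma sum_change3 [DecidableEq V] (S : Finset V) (f g : V → ℕ)
    (v w u : V) (hvw : v ≠ w) (hvu : v ≠ u) (hwu : w ≠ u)
    (h : ∀ z, z ≠ v → z ≠ w → z ≠ u → g z = f z) :
    ∑ z ∈ S, g z + ((if v ∈ S then f v else 0) + (if w ∈ S then f w else 0)
        + (if u ∈ S then f u else 0))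
      = ∑ z ∈ S, f z + ((if v ∈ S then g v else 0) + (if w ∈ S then g w else 0)
        + (if u ∈ S then g u else 0)) := by
  have hvmem : v ∉ ({w, u} : Finset V) := by simp [hvw, hvu]
  have hsub : ∀ (t : V → ℕ), ∑ z ∈ S ∩ ({v, w, u} : Finset V), t z
      = (if v ∈ S then t v else 0) + ((if w ∈ S then t w else 0)
        + (if u ∈ S then t u else 0)) := by
    intro t
    rw [Finset.inter_comm, ← Finset.sum_ite_mem, Finset.sum_insert hvmem,
      Finset.sum_pair hwu]
  have e1 : ∑ z ∈ S, g z
      = ∑ z ∈ S ∩ ({v,w,u} : Finset V), g z + ∑ z ∈ S \ ({v,w,u} : Finset V), g z :=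
    (Finset.sum_inter_add_sum_sdiff S _ g).symm
  have e2 : ∑ z ∈ S, f z
      = ∑ z ∈ S ∩ ({v,w,u} : Finset V), f z + ∑ z ∈ S \ ({v,w,u} : Finset V), f z :=
    (Finset.sum_inter_add_sum_sdiff S _ f).symm
  have hdiff : ∑ z ∈ S \ ({v,w,u} : Finset V), g z = ∑ z ∈ S \ ({v,w,u} : Finset V), f z := by
    refine Finset.sum_congr rfl fun z hz => ?_
    simp only [Finset.mem_sdiff, Finset.mem_insert, Finset.mem_singleton] at hz
    exact h z (fun hh => hz.2 (Or.inl hh)) (fun hh => hz.2 (Or.inr (Or.inl hh)))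
      (fun hh => hz.2 (Or.inr (Or.inr hh)))
  rw [e1, e2, hsub, hsub]
  omega

/-- Monotonicity: a rubbling move executable from `q` is executable from any
pointwise larger distribution, with pointwise larger result. -/
private lemma move_mono {W : Type*} (H : SimpleGraph W) {q q' r : W → ℕ}
    (hqr : ∀ z, q z ≤ r z) (h : IsRubblingMove H q q') :
    ∃ r', IsRubblingMove H r r' ∧ ∀ z, q' z ≤ r' z := by
  classical
  rcases h with ⟨v, u, hadj, h2, hv, hu, hz⟩ | ⟨v, w, u, hvw, hav, haw, h1v, h1w, hv, hw, hu, hz⟩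
  · refine ⟨fun z => if z = v then r v - 2 else if z = u then r u + 1 else r z,
      Or.inl ⟨v, u, hadj, le_trans h2 (hqr v), by simp, ?_, ?_⟩, ?_⟩
    · simp [hadj.ne.symm]
    · intro z hz1 hz2; simp [hz1, hz2]
    · intro z
      by_cases hz1 : z = v
      · have := hqr v; simp only [hz1, hv]
        first | omega | (split_ifs <;> first | omega | simp_all)
      by_cases hz2 : z = u
      · have := hqr u; simp only [hz2, hu]
        first | omega | (split_ifs <;> first | omega | simp_all)
      · have := hqr z; simp only [hz z hz1 hz2, hz1, hz2, if_false]; omega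
  · have hvu : v ≠ u := hav.ne
    have hwu : w ≠ u := haw.ne
    refine ⟨fun z => if z = v then r v - 1 else if z = w then r w - 1 else
        if z = u then r u + 1 else r z,
      Or.inr ⟨v, w, u, hvw, hav, haw, le_trans h1v (hqr v), le_trans h1w (hqr w),
        by simp, ?_, ?_, ?_⟩, ?_⟩
    · simp [hvw.symm]
    · simp [hvu.symm, hwu.symm]
    · intro z hz1 hz2 hz3; simp [hz1, hz2, hz3]
    · intro z
      by_cases hz1 : z = v
      · have := hqr v; simp only [hz1, hv]
        first | omega | (split_ifs <;> first | omega | simp_all)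
      by_cases hz2 : z = w
      · have := hqr w; simp only [hz2, hw]
        first | omega | (split_ifs <;> first | omega | simp_all)
      by_cases hz3 : z = u
      · have := hqr u; simp only [hz3, hu]
        first | omega | (split_ifs <;> first | omega | simp_all)
      · have := hqr z
        simp only [hz z hz1 hz2 hz3, hz1, hz2, hz3, if_false]; omega

private lemma steps_mono {W : Type*} (H : SimpleGraph W) {q qf : W → ℕ}
    (h : Relation.ReflTransGen (IsRubblingMove H) q qf) :
    ∀ r : W → ℕ, (∀ z, q z ≤ r z) →
      ∃ rf, Relation.ReflTransGen (IsRubblingMove H) r rf ∧ ∀ z, qf z ≤ rf z := by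
  induction h with
  | refl => exact fun r hr => ⟨r, Relation.ReflTransGen.refl, hr⟩
  | tail hs hmove ih =>
    intro r hr
    obtain ⟨rm, hrm, hle⟩ := ih r hr
    obtain ⟨rf, hmv, hle'⟩ := move_mono H hle hmove
    exact ⟨rf, hrm.tail hmv, hle'⟩

/-- The collapsed (level-sum) distribution on the path. -/
private noncomputable def levelSum [Fintype V] (G : SimpleGraph V) (v0 : V) (D : ℕ) (p : V → ℕ) :
    Fin (D + 1) → ℕ :=
  fun i => ∑ w ∈ Finset.univ.filter (fun w => G.dist v0 w = (i : ℕ)), p w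

private lemma levelSum_single_le [Fintype V] (G : SimpleGraph V) (v0 : V) (D : ℕ)
    (p : V → ℕ) (y : V) (i : Fin (D + 1)) (hy : G.dist v0 y = (i : ℕ)) :
    p y ≤ levelSum G v0 D p i :=
  Finset.single_le_sum (fun _ _ => Nat.zero_le _)
    (by simp [Finset.mem_filter, hy])

/-- One rubbling move on `G` either only decreases the collapsed distribution, or
induces a rubbling move on the path. -/
private lemma push_step [Fintype V] (G : SimpleGraph V) (hconn : G.Connected)
    (v0 : V) (D : ℕ) (hD : ∀ w, G.dist v0 w ≤ D) {p p' : V → ℕ}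
    (h : IsRubblingMove G p p') :
    (∀ i, levelSum G v0 D p' i ≤ levelSum G v0 D p i) ∨
      IsRubblingMove (SimpleGraph.pathGraph (D + 1)) (levelSum G v0 D p)
        (levelSum G v0 D p') := by
  classical
  have hstep : ∀ {a b : V}, G.Adj a b → G.dist v0 b ≤ G.dist v0 a + 1 := by
    intro a b hab
    have h1 := hconn.dist_triangle (u := v0) (v := a) (w := b)
    rwa [SimpleGraph.dist_eq_one_iff_adj.mpr hab] at h1
  rcases h with ⟨v, u, hadj, h2, hv, hu, hz⟩ | ⟨v, w, u, hvw, hav, haw, h1v, h1w, hv, hw, hu, hz⟩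
  · -- pebbling move
    have key : ∀ (j : ℕ) (hj : j < D + 1),
        levelSum G v0 D p' ⟨j, hj⟩
            + ((if G.dist v0 v = j then p v else 0) + (if G.dist v0 u = j then p u else 0))
          = levelSum G v0 D p ⟨j, hj⟩
            + ((if G.dist v0 v = j then p v - 2 else 0)
              + (if G.dist v0 u = j then p u + 1 else 0)) := by
      intro j hj
      have hk := sum_change2 (Finset.univ.filter (fun w => G.dist v0 w = j)) p p' v u
        hadj.ne hz
      simp only [Finset.mem_filter, Finset.mem_univ, true_and, hv, hu] at hk
      exact hk
    by_cases hab : G.dist v0 v = G.dist v0 u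
    · left
      intro i
      have k := key (i : ℕ) i.isLt
      simp only [Fin.eta] at k
      split_ifs at k <;> omega
    · right
      have haD : G.dist v0 v < D + 1 := Nat.lt_succ_of_le (hD v)
      have hbD : G.dist v0 u < D + 1 := Nat.lt_succ_of_le (hD u)
      have hadjP : (SimpleGraph.pathGraph (D + 1)).Adj ⟨G.dist v0 v, haD⟩ ⟨G.dist v0 u, hbD⟩ := by
        rw [SimpleGraph.pathGraph_adj]
        have e1 := hstep hadj
        have e2 := hstep hadj.symm
        simp only [Fin.val_mk] at *
        omega
      have hvle : p v ≤ levelSum G v0 D p ⟨G.dist v0 v, haD⟩ :=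
        levelSum_single_le G v0 D p v _ rfl
      refine Or.inl ⟨⟨G.dist v0 v, haD⟩, ⟨G.dist v0 u, hbD⟩, hadjP, by omega, ?_, ?_, ?_⟩
      · have k := key (G.dist v0 v) haD
        split_ifs at k <;> omega
      · have k := key (G.dist v0 u) hbD
        split_ifs at k <;> omega
      · intro z hz1 hz2
        have hz1' : G.dist v0 v ≠ (z : ℕ) := fun hh => hz1 (Fin.ext hh.symm)
        have hz2' : G.dist v0 u ≠ (z : ℕ) := fun hh => hz2 (Fin.ext hh.symm)
        have k := key (z : ℕ) z.isLt
        simp only [Fin.eta] at k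
        split_ifs at k <;> omega
  · -- strict rubbling move
    have hvu : v ≠ u := hav.ne
    have hwu : w ≠ u := haw.ne
    have key : ∀ (j : ℕ) (hj : j < D + 1),
        levelSum G v0 D p' ⟨j, hj⟩
            + ((if G.dist v0 v = j then p v else 0) + (if G.dist v0 w = j then p w else 0)
              + (if G.dist v0 u = j then p u else 0))
          = levelSum G v0 D p ⟨j, hj⟩
            + ((if G.dist v0 v = j then p v - 1 else 0)
              + (if G.dist v0 w = j then p w - 1 else 0)
              + (if G.dist v0 u = j then p u + 1 else 0)) := by
      intro j hj
      have hk := sum_change3 (Finset.univ.filter (fun y => G.dist v0 y = j)) p p' v w u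
        hvw hvu hwu hz
      simp only [Finset.mem_filter, Finset.mem_univ, true_and, hv, hw, hu] at hk
      exact hk
    have haD : G.dist v0 v < D + 1 := Nat.lt_succ_of_le (hD v)
    have hcD : G.dist v0 w < D + 1 := Nat.lt_succ_of_le (hD w)
    have hbD : G.dist v0 u < D + 1 := Nat.lt_succ_of_le (hD u)
    by_cases hab : G.dist v0 v = G.dist v0 u
    · left
      intro i
      have k := key (i : ℕ) i.isLt
      simp only [Fin.eta] at k
      split_ifs at k <;> omega
    by_cases hcb : G.dist v0 w = G.dist v0 u
    · left
      intro i
      have k := key (i : ℕ) i.isLt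
      simp only [Fin.eta] at k
      split_ifs at k <;> omega
    have hadjP : (SimpleGraph.pathGraph (D + 1)).Adj ⟨G.dist v0 v, haD⟩ ⟨G.dist v0 u, hbD⟩ := by
      rw [SimpleGraph.pathGraph_adj]
      have e1 := hstep hav
      have e2 := hstep hav.symm
      simp only [Fin.val_mk] at *
      omega
    have hadjP' : (SimpleGraph.pathGraph (D + 1)).Adj ⟨G.dist v0 w, hcD⟩ ⟨G.dist v0 u, hbD⟩ := by
      rw [SimpleGraph.pathGraph_adj]
      have e1 := hstep haw
      have e2 := hstep haw.symm
      simp only [Fin.val_mk] at *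
      omega
    by_cases hac : G.dist v0 v = G.dist v0 w
    · -- same level: a pebbling move on the path
      right
      have hpair : p v + p w ≤ levelSum G v0 D p ⟨G.dist v0 v, haD⟩ := by
        rw [← Finset.sum_pair hvw]
        apply Finset.sum_le_sum_of_subset
        intro z hz'
        simp only [Finset.mem_insert, Finset.mem_singleton] at hz'
        simp only [Finset.mem_filter, Finset.mem_univ, true_and, Fin.val_mk]
        rcases hz' with rfl | rfl
        · rfl
        · exact hac.symm
      refine Or.inl ⟨⟨G.dist v0 v, haD⟩, ⟨G.dist v0 u, hbD⟩, hadjP, by omega, ?_, ?_, ?_⟩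
      · have k := key (G.dist v0 v) haD
        split_ifs at k <;> omega
      · have k := key (G.dist v0 u) hbD
        split_ifs at k <;> omega
      · intro z hz1 hz2
        have hz1' : G.dist v0 v ≠ (z : ℕ) := fun hh => hz1 (Fin.ext hh.symm)
        have hz2' : G.dist v0 u ≠ (z : ℕ) := fun hh => hz2 (Fin.ext hh.symm)
        have k := key (z : ℕ) z.isLt
        simp only [Fin.eta] at k
        split_ifs at k <;> omega
    · -- different levels: a strict rubbling move on the path
      right
      have hne : (⟨G.dist v0 v, haD⟩ : Fin (D + 1)) ≠ ⟨G.dist v0 w, hcD⟩ := by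
        intro hh
        exact hac (by simpa [Fin.ext_iff] using hh)
      have hvle : p v ≤ levelSum G v0 D p ⟨G.dist v0 v, haD⟩ :=
        levelSum_single_le G v0 D p v _ rfl
      have hwle : p w ≤ levelSum G v0 D p ⟨G.dist v0 w, hcD⟩ :=
        levelSum_single_le G v0 D p w _ rfl
      refine Or.inr ⟨⟨G.dist v0 v, haD⟩, ⟨G.dist v0 w, hcD⟩, ⟨G.dist v0 u, hbD⟩,
        hne, hadjP, hadjP', by omega, by omega, ?_, ?_, ?_, ?_⟩
      · have k := key (G.dist v0 v) haD
        split_ifs at k <;> omega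
      · have k := key (G.dist v0 w) hcD
        split_ifs at k <;> omega
      · have k := key (G.dist v0 u) hbD
        split_ifs at k <;> omega
      · intro z hz1 hz2 hz3
        have hz1' : G.dist v0 v ≠ (z : ℕ) := fun hh => hz1 (Fin.ext hh.symm)
        have hz2' : G.dist v0 w ≠ (z : ℕ) := fun hh => hz2 (Fin.ext hh.symm)
        have hz3' : G.dist v0 u ≠ (z : ℕ) := fun hh => hz3 (Fin.ext hh.symm)
        have k := key (z : ℕ) z.isLt
        simp only [Fin.eta] at k
        split_ifs at k <;> omega

/-- Collapsing the BFS levels of a connected graph `G` (from a root `v₀`) onto a path: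
if `x` is reachable from `p` in `G`, then the vertex `u_{dist(v₀,x)}` of the path
`P_{D+1}` is reachable from the collapsed distribution, where `D` is the maximal
distance from `v₀`. -/
theorem reachable_pathGraph_of_reachable {V : Type*} [Fintype V] (G : SimpleGraph V)
    (hconn : G.Connected) (v0 : V) (D : ℕ)
    (hD : D = Finset.univ.sup fun w => G.dist v0 w)
    (p : V → ℕ) (x : V) (hx : RubblingReachable G p x) :
    RubblingReachable (SimpleGraph.pathGraph (D + 1))
      (fun i => ∑ w ∈ Finset.univ.filter (fun w => G.dist v0 w = (i : ℕ)), p w)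
      ⟨G.dist v0 x, by
        subst hD
        exact Nat.lt_succ_of_le (Finset.le_sup (f := fun w => G.dist v0 w)
          (Finset.mem_univ x))⟩ := by
  have hDle : ∀ w, G.dist v0 w ≤ D := by
    intro w
    rw [hD]
    exact Finset.le_sup (f := fun w => G.dist v0 w) (Finset.mem_univ w)
  obtain ⟨pf, hsteps, hpx⟩ := hx
  have main : ∀ {p1 p2 : V → ℕ}, Relation.ReflTransGen (IsRubblingMove G) p1 p2 →
      ∃ r, Relation.ReflTransGen (IsRubblingMove (SimpleGraph.pathGraph (D + 1)))
          (levelSum G v0 D p1) r ∧ ∀ i, levelSum G v0 D p2 i ≤ r i := by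
    intro p1 p2 hs
    induction hs with
    | refl => exact ⟨_, Relation.ReflTransGen.refl, fun i => le_rfl⟩
    | tail hs hmv ih =>
      obtain ⟨r, hr, hle⟩ := ih
      rcases push_step G hconn v0 D hDle hmv with hle2 | hmv2
      · exact ⟨r, hr, fun i => le_trans (hle2 i) (hle i)⟩
      · obtain ⟨r', hmv', hle'⟩ := move_mono _ hle hmv2
        exact ⟨r', hr.tail hmv', hle'⟩
  obtain ⟨r, hr, hle⟩ := main hsteps
  refine ⟨r, hr, ?_⟩
  have hx1 : pf x ≤ levelSum G v0 D pf ⟨G.dist v0 x, Nat.lt_succ_of_le (hDle x)⟩ :=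
    levelSum_single_le G v0 D pf x _ rfl
  exact le_trans (le_trans hpx hx1) (hle _)
end

section
/- Let G be a simple connected graph, let x be a vertex of G, and for a pebble distribution p on G define the weight w_x(p) = Σ_{v ∈ V(G)} p(v) · 2^{−dist(x,v)} (a rational number). If the pebble distribution p' is obtained from p by applying a single rubbling move (which is applicable, i.e., the pebbles it removes are present in p), then w_x(p') ≤ w_x(p). -/
open Finset

variable {V : Type*}

/-- A rubbling move cannot increase the weight `w_x(p) = Σ_v p(v)·2^{-dist(x,v)}`. -/
theorem weight_le_of_rubblingMove {V : Type*} [Fintype V] (G : SimpleGraph V)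
    (hconn : G.Connected) (x : V) (p p' : V → ℕ) (h : IsRubblingMove G p p') :
    ∑ v, (p' v : ℚ) * (1 / 2) ^ G.dist x v ≤ ∑ v, (p v : ℚ) * (1 / 2) ^ G.dist x v := by
  classical
  set c : V → ℚ := fun z => (1 / 2 : ℚ) ^ G.dist x z with hc
  have hcpos : ∀ z, 0 < c z := fun z => pow_pos (by norm_num) _
  have key : ∀ a b : V, G.Adj a b → c b ≤ 2 * c a := by
    intro a b hab
    have hle : G.dist x a ≤ G.dist x b + 1 := by
      calc G.dist x a ≤ G.dist x b + G.dist b a := hconn.dist_triangle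
        _ = G.dist x b + 1 := by rw [(SimpleGraph.dist_eq_one_iff_adj).2 hab.symm]
    have : (1 / 2 : ℚ) ^ (G.dist x b + 1) ≤ (1 / 2 : ℚ) ^ G.dist x a :=
      pow_le_pow_of_le_one (by norm_num) (by norm_num) hle
    rw [pow_succ] at this
    simp only [hc]
    nlinarith [this]
  have main : ∑ z, ((p' z : ℚ) * c z - (p z : ℚ) * c z) ≤ 0 := by
    rcases h with ⟨v, u, hadj, h2, hv, hu, hz⟩ | ⟨v, w, u, hvw, hvu, hwu, h1v, h1w, hv, hw, hu, hz⟩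
    · have hne : v ≠ u := hadj.ne
      have hsub : ∑ z, ((p' z : ℚ) * c z - (p z : ℚ) * c z)
          = ∑ z ∈ ({v, u} : Finset V), ((p' z : ℚ) * c z - (p z : ℚ) * c z) := by
        refine (Finset.sum_subset (Finset.subset_univ _) ?_).symm
        intro z _ hzmem
        simp only [Finset.mem_insert, Finset.mem_singleton, not_or] at hzmem
        rw [hz z hzmem.1 hzmem.2]; ring
      rw [hsub, Finset.sum_pair hne, hv, hu]
      have hcast : ((p v - 2 : ℕ) : ℚ) = (p v : ℚ) - 2 := by
        rw [Nat.cast_sub h2]; norm_num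
      rw [hcast]
      push_cast
      have := key v u hadj
      nlinarith [hcpos v, hcpos u]
    · have hvu' : v ≠ u := hvu.ne
      have hwu' : w ≠ u := hwu.ne
      have hsub : ∑ z, ((p' z : ℚ) * c z - (p z : ℚ) * c z)
          = ∑ z ∈ ({v, w, u} : Finset V), ((p' z : ℚ) * c z - (p z : ℚ) * c z) := by
        refine (Finset.sum_subset (Finset.subset_univ _) ?_).symm
        intro z _ hzmem
        simp only [Finset.mem_insert, Finset.mem_singleton, not_or] at hzmem
        rw [hz z hzmem.1 hzmem.2.1 hzmem.2.2]; ring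
      have hnotmem : v ∉ ({w, u} : Finset V) := by simp [hvw, hvu']
      have hnotmem2 : w ∉ ({u} : Finset V) := by simp [hwu']
      rw [hsub, Finset.sum_insert hnotmem, Finset.sum_insert hnotmem2,
        Finset.sum_singleton, hv, hw, hu]
      have hcv : ((p v - 1 : ℕ) : ℚ) = (p v : ℚ) - 1 := by
        rw [Nat.cast_sub h1v]; norm_num
      have hcw : ((p w - 1 : ℕ) : ℚ) = (p w : ℚ) - 1 := by
        rw [Nat.cast_sub h1w]; norm_num
      rw [hcv, hcw]
      push_cast
      have h1 := key v u hvu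
      have h2 := key w u hwu
      nlinarith [hcpos v, hcpos w, hcpos u]
  have := Finset.sum_sub_distrib (f := fun z => (p' z : ℚ) * c z)
    (g := fun z => (p z : ℚ) * c z) (s := Finset.univ)
  linarith [main, this.symm.le, this.le]
end

section
/- Let d ≥ 1 and let G be the graph whose vertex set is the set of d-tuples with entries in {1, …, 2^d}, with two distinct vertices adjacent iff they agree in all but one coordinate. Then for every pebble distribution on G of size 2^d − 1, there is a vertex of G that is not reachable from that distribution. -/
open Finset

variable {V : Type*}

/-- The graph on `d`-tuples with entries in `{1, …, 2^d}` (modelled as `Fin (2^d)`),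
where two distinct vertices are adjacent iff they agree in all but one coordinate. -/
def hammingGraph (d : ℕ) : SimpleGraph (Fin d → Fin (2 ^ d)) :=
  SimpleGraph.fromRel fun a b => ∃ i, ∀ j, j ≠ i → a j = b j

lemma sum_split2 {V : Type*} [Fintype V] [DecidableEq V] (f : V → ℕ) (a b : V) (h : a ≠ b) :
    ∑ z, f z = ∑ z ∈ (univ.erase a).erase b, f z + f b + f a := by
  rw [Finset.sum_erase_add _ _ (by simp [h.symm]), Finset.sum_erase_add _ _ (by simp)]

lemma sum_split3 {V : Type*} [Fintype V] [DecidableEq V] (f : V → ℕ) (a b c : V)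
    (hab : a ≠ b) (hac : a ≠ c) (hbc : b ≠ c) :
    ∑ z, f z = ∑ z ∈ ((univ.erase a).erase b).erase c, f z + f c + f b + f a := by
  rw [Finset.sum_erase_add _ _ (by simp [hac.symm, hbc.symm]),
    Finset.sum_erase_add _ _ (by simp [hab.symm]), Finset.sum_erase_add _ _ (by simp)]

lemma rubbling_weight_mono {V : Type*} [Fintype V] [DecidableEq V] (G : SimpleGraph V)
    (w : V → ℕ) (hw : ∀ v u, G.Adj v u → w u ≤ 2 * w v) {p p' : V → ℕ}
    (h : IsRubblingMove G p p') : ∑ z, p' z * w z ≤ ∑ z, p z * w z := by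
  rcases h with ⟨v, u, hadj, h2, hv, hu, hz⟩ | ⟨v, u, t, hvu, hav, hau, h1v, h1u, hv, hu, ht, hz⟩
  · have hne : v ≠ u := G.ne_of_adj hadj
    rw [sum_split2 (fun z => p' z * w z) v u hne, sum_split2 (fun z => p z * w z) v u hne]
    have hsum : ∑ z ∈ (univ.erase v).erase u, p' z * w z
        = ∑ z ∈ (univ.erase v).erase u, p z * w z := by
      refine Finset.sum_congr rfl fun z hz' => ?_
      simp only [Finset.mem_erase] at hz'
      rw [hz z hz'.2.1 hz'.1]
    rw [hsum, hv, hu]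
    have hwu : w u ≤ 2 * w v := hw v u hadj
    obtain ⟨k, hk⟩ := Nat.exists_eq_add_of_le h2
    rw [hk]
    have : (2 + k - 2) * w v = k * w v := by congr 1; omega
    rw [this]
    nlinarith [Nat.zero_le (k * w v)]
  · have hvt : v ≠ t := G.ne_of_adj hav
    have hut : u ≠ t := G.ne_of_adj hau
    rw [sum_split3 (fun z => p' z * w z) v u t hvu hvt hut,
      sum_split3 (fun z => p z * w z) v u t hvu hvt hut]
    have hsum : ∑ z ∈ ((univ.erase v).erase u).erase t, p' z * w z
        = ∑ z ∈ ((univ.erase v).erase u).erase t, p z * w z := by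
      refine Finset.sum_congr rfl fun z hz' => ?_
      simp only [Finset.mem_erase] at hz'
      rw [hz z hz'.2.2.1 hz'.2.1 hz'.1]
    rw [hsum, hv, hu, ht]
    have hwv : w t ≤ 2 * w v := hw v t hav
    have hwu : w t ≤ 2 * w u := hw u t hau
    have hwt : w t ≤ w v + w u := by omega
    obtain ⟨k, hk⟩ := Nat.exists_eq_add_of_le h1v
    obtain ⟨l, hl⟩ := Nat.exists_eq_add_of_le h1u
    rw [hk, hl]
    have h1 : (1 + k - 1) * w v = k * w v := by congr 1; omega
    have h2 : (1 + l - 1) * w u = l * w u := by congr 1; omega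
    rw [h1, h2]
    nlinarith [Nat.zero_le (k * w v), Nat.zero_le (l * w u)]

lemma rubbling_weight_mono' {V : Type*} [Fintype V] [DecidableEq V] (G : SimpleGraph V)
    (w : V → ℕ) (hw : ∀ v u, G.Adj v u → w u ≤ 2 * w v) {p q : V → ℕ}
    (h : Relation.ReflTransGen (IsRubblingMove G) p q) :
    ∑ z, q z * w z ≤ ∑ z, p z * w z := by
  induction h with
  | refl => exact le_rfl
  | tail _ hstep ih => exact le_trans (rubbling_weight_mono G w hw hstep) ih


/-- For `d ≥ 1`, from any pebble distribution of size `2^d - 1` on the graph of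
`d`-tuples with entries in `{1, …, 2^d}` (adjacent iff they agree in all but one
coordinate), some vertex is not reachable. -/
theorem exists_not_reachable_hammingGraph (d : ℕ) (hd : 1 ≤ d)
    (p : (Fin d → Fin (2 ^ d)) → ℕ) (hp : ∑ v, p v = 2 ^ d - 1) :
    ∃ x, ¬ RubblingReachable (hammingGraph d) p x := by
  classical
  set supp : Finset (Fin d → Fin (2 ^ d)) := univ.filter (fun v => p v ≠ 0) with hsupp
  have hcard : supp.card ≤ 2 ^ d - 1 := by
    calc supp.card = ∑ v ∈ supp, 1 := by simp
    _ ≤ ∑ v ∈ supp, p v := Finset.sum_le_sum fun v hv => by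
        simp only [hsupp, Finset.mem_filter] at hv; omega
    _ ≤ ∑ v, p v := Finset.sum_le_sum_of_subset (Finset.subset_univ _)
    _ = 2 ^ d - 1 := hp
  have hex : ∀ i : Fin d, ∃ a : Fin (2 ^ d), ∀ v ∈ supp, v i ≠ a := by
    intro i
    have h1 : (supp.image (fun v => v i))ᶜ.Nonempty := by
      rw [← Finset.card_pos, Finset.card_compl, Fintype.card_fin]
      have h3 : (supp.image (fun v => v i)).card ≤ supp.card := Finset.card_image_le
      have h2 : (1:ℕ) ≤ 2 ^ d := Nat.one_le_two_pow
      generalize (supp.image (fun v => v i)).card = n at *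
      omega
    obtain ⟨a, ha⟩ := h1
    refine ⟨a, fun v hv hva => ?_⟩
    rw [Finset.mem_compl] at ha
    exact ha (Finset.mem_image.mpr ⟨v, hv, hva⟩)
  choose x hx using hex
  refine ⟨x, ?_⟩
  rintro ⟨q, hq, hqx⟩
  -- weight function
  set w : (Fin d → Fin (2 ^ d)) → ℕ :=
    fun v => 2 ^ (univ.filter (fun j => v j = x j)).card with hwdef
  have hw : ∀ v u, (hammingGraph d).Adj v u → w u ≤ 2 * w v := by
    intro v u hadj
    obtain ⟨hne, hrel⟩ := hadj
    have hrel' : ∃ i, ∀ j, j ≠ i → v j = u j := by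
      rcases hrel with ⟨i, hi⟩ | ⟨i, hi⟩
      · exact ⟨i, hi⟩
      · exact ⟨i, fun j hj => (hi j hj).symm⟩
    obtain ⟨i, hi⟩ := hrel'
    have hsub : (univ.filter (fun j => u j = x j)) ⊆
        insert i (univ.filter (fun j => v j = x j)) := by
      intro j hj
      simp only [Finset.mem_filter, Finset.mem_univ, true_and] at hj
      by_cases hji : j = i
      · simp [hji]
      · simp only [Finset.mem_insert, Finset.mem_filter, Finset.mem_univ, true_and]
        exact Or.inr (by rw [hi j hji]; exact hj)
    have hc : (univ.filter (fun j => u j = x j)).card ≤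
        (univ.filter (fun j => v j = x j)).card + 1 := by
      calc _ ≤ (insert i (univ.filter (fun j => v j = x j))).card :=
            Finset.card_le_card hsub
      _ ≤ _ := Finset.card_insert_le _ _
    calc w u ≤ 2 ^ ((univ.filter (fun j => v j = x j)).card + 1) :=
          Nat.pow_le_pow_right (by norm_num) hc
    _ = 2 * w v := by rw [pow_succ]; ring
  have hmono := rubbling_weight_mono' (hammingGraph d) w hw hq
  have hWp : ∑ z, p z * w z = 2 ^ d - 1 := by
    rw [← hp]
    refine Finset.sum_congr rfl fun v _ => ?_
    by_cases hv : p v = 0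
    · simp [hv]
    · have hmem : v ∈ supp := by simp [hsupp, hv]
      have hfil : (univ.filter (fun j => v j = x j)) = ∅ := by
        refine Finset.filter_eq_empty_iff.mpr fun j _ => hx j v hmem
      simp [hwdef, hfil]
  have hwx : w x = 2 ^ d := by
    have : (univ.filter (fun j => x j = x j)) = (univ : Finset (Fin d)) := by simp
    simp [hwdef, this]
  have hle : w x ≤ ∑ z, q z * w z := by
    calc w x ≤ q x * w x := Nat.le_mul_of_pos_left _ hqx
    _ ≤ _ := Finset.single_le_sum (f := fun z => q z * w z)
        (fun z _ => Nat.zero_le _) (Finset.mem_univ x)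
  rw [hwx] at hle
  rw [hWp] at hmono
  have h2 : (1:ℕ) ≤ 2 ^ d := Nat.one_le_two_pow
  omega
end

section
/- For every integer d ≥ 1 there is a simple connected graph G with diameter d and ρ_opt(G) = 2^d; namely, the graph whose vertex set is the set of d-tuples with entries in {1, …, 2^d}, with two distinct vertices adjacent iff they agree in all but one coordinate, has diameter d and optimal rubbling number exactly 2^d. -/
open Finset

variable {V : Type*}

section Aux

variable {d : ℕ}

lemma hd_le_one_of_agree {d : ℕ} {a b : Fin d → Fin (2 ^ d)} {i : Fin d}
    (hi : ∀ j, j ≠ i → a j = b j) : hammingDist a b ≤ 1 := by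
  have hsub : (Finset.univ.filter fun j => a j ≠ b j) ⊆ {i} := by
    intro j hj
    simp only [mem_filter, mem_univ, true_and] at hj
    simp only [mem_singleton]
    by_contra hji
    exact hj (hi j hji)
  have := Finset.card_le_card hsub
  simpa [hammingDist] using this

lemma hg_adj_hd {a b : Fin d → Fin (2 ^ d)} (h : (hammingGraph d).Adj a b) :
    hammingDist a b ≤ 1 := by
  obtain ⟨hne, h | h⟩ := h
  · obtain ⟨i, hi⟩ := h
    exact hd_le_one_of_agree hi
  · obtain ⟨i, hi⟩ := h
    rw [hammingDist_comm]
    exact hd_le_one_of_agree hi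

lemma hg_adj_update {a : Fin d → Fin (2 ^ d)} {i : Fin d} {c : Fin (2 ^ d)} (h : a i ≠ c) :
    (hammingGraph d).Adj a (Function.update a i c) := by
  refine ⟨fun he => h ?_, Or.inl ⟨i, fun j hj => (Function.update_of_ne hj _ _).symm⟩⟩
  exact (congrFun he i).trans (Function.update_self i c a)

lemma hg_hd_update {a b : Fin d → Fin (2 ^ d)} {i : Fin d} (h : a i ≠ b i) :
    hammingDist (Function.update a i (b i)) b + 1 ≤ hammingDist a b := by
  have hsub : (Finset.univ.filter fun j => Function.update a i (b i) j ≠ b j) ⊆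
      Finset.univ.filter fun j => a j ≠ b j := by
    intro j hj
    simp only [mem_filter, mem_univ, true_and] at hj ⊢
    intro hj2
    rcases eq_or_ne j i with rfl | hji
    · exact hj (by simp)
    · exact hj (by rw [Function.update_of_ne hji]; exact hj2)
  have hss : (Finset.univ.filter fun j => Function.update a i (b i) j ≠ b j) ⊂
      Finset.univ.filter fun j => a j ≠ b j := by
    refine ⟨hsub, fun hsub' => ?_⟩
    have : i ∈ Finset.univ.filter fun j => Function.update a i (b i) j ≠ b j :=
      hsub' (by simp [h])
    simp at this
  have := Finset.card_lt_card hss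
  simpa [hammingDist] using this

lemma hg_exists_walk : ∀ (n : ℕ) (a b : Fin d → Fin (2 ^ d)), hammingDist a b ≤ n →
    ∃ w : (hammingGraph d).Walk a b, w.length ≤ n := by
  intro n
  induction n with
  | zero =>
    intro a b h
    obtain rfl := eq_of_hammingDist_eq_zero (Nat.le_zero.mp h)
    exact ⟨.nil, le_refl _⟩
  | succ n ih =>
    intro a b h
    by_cases hab : a = b
    · subst hab; exact ⟨.nil, Nat.zero_le _⟩
    · obtain ⟨i, hi⟩ : ∃ i, a i ≠ b i := by
        by_contra hc; push_neg at hc; exact hab (funext hc)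
      obtain ⟨w, hw⟩ := ih (Function.update a i (b i)) b (by have := hg_hd_update hi; omega)
      exact ⟨.cons (hg_adj_update hi) w, by simpa [SimpleGraph.Walk.length_cons] using hw⟩

lemma hg_hd_le_length {a b : Fin d → Fin (2 ^ d)} (w : (hammingGraph d).Walk a b) :
    hammingDist a b ≤ w.length := by
  induction w with
  | nil => simp
  | @cons a c b h w ih =>
    calc hammingDist a b ≤ hammingDist a c + hammingDist c b := hammingDist_triangle _ _ _
      _ ≤ 1 + w.length := add_le_add (hg_adj_hd h) ih
      _ = (SimpleGraph.Walk.cons h w).length := by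
        simp [SimpleGraph.Walk.length_cons]; omega

instance : Nonempty (Fin d → Fin (2 ^ d)) :=
  ⟨fun _ => ⟨0, by positivity⟩⟩

lemma hg_connected : (hammingGraph d).Connected := by
  rw [SimpleGraph.connected_iff]
  refine ⟨fun a b => ?_, inferInstance⟩
  obtain ⟨w, _⟩ := hg_exists_walk (hammingDist a b) a b le_rfl
  exact ⟨w⟩

lemma hg_dist_eq (a b : Fin d → Fin (2 ^ d)) :
    (hammingGraph d).dist a b = hammingDist a b := by
  refine le_antisymm ?_ ?_
  · obtain ⟨w, hw⟩ := hg_exists_walk (hammingDist a b) a b le_rfl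
    exact le_trans (SimpleGraph.dist_le w) hw
  · obtain ⟨w, hw⟩ := (hg_connected (d := d)).exists_walk_length_eq_dist a b
    exact hw ▸ hg_hd_le_length w

lemma hg_hd_le (a b : Fin d → Fin (2 ^ d)) : hammingDist a b ≤ d := by
  simpa using hammingDist_le_card_fintype (x := a) (y := b)

lemma hg_ediam_ne_top : (hammingGraph d).ediam ≠ ⊤ := by
  have h : (hammingGraph d).ediam ≤ (d : ℕ∞) := by
    refine SimpleGraph.ediam_le_of_edist_le fun a b => ?_
    obtain ⟨w, hw⟩ := hg_exists_walk (hammingDist a b) a b le_rfl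
    calc (hammingGraph d).edist a b ≤ (w.length : ℕ∞) := SimpleGraph.edist_le w
      _ ≤ (d : ℕ∞) := by exact_mod_cast le_trans hw (hg_hd_le a b)
  exact ne_top_of_le_ne_top (by simp) h

lemma hg_diam (hd : 1 ≤ d) : (hammingGraph d).diam = d := by
  refine le_antisymm ?_ ?_
  · obtain ⟨u, v, huv⟩ := SimpleGraph.exists_dist_eq_diam (G := hammingGraph d)
    rw [← huv, hg_dist_eq]
    exact hg_hd_le u v
  · have h2 : 2 ≤ 2 ^ d := by
      calc 2 = 2 ^ 1 := by norm_num
        _ ≤ 2 ^ d := Nat.pow_le_pow_right (by norm_num) hd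
    set a : Fin d → Fin (2 ^ d) := fun _ => ⟨0, by omega⟩ with ha
    set b : Fin d → Fin (2 ^ d) := fun _ => ⟨1, by omega⟩ with hb
    have hdist : hammingDist a b = d := by
      have : (Finset.univ.filter fun j : Fin d => a j ≠ b j) = Finset.univ := by
        refine Finset.filter_true_of_mem fun j _ => ?_
        simp [ha, hb, Fin.ext_iff]
      simp [hammingDist, this]
    calc d = (hammingGraph d).dist a b := by rw [hg_dist_eq, hdist]
      _ ≤ (hammingGraph d).diam := SimpleGraph.dist_le_diam hg_ediam_ne_top

end Aux

section Weight

variable {G : SimpleGraph V} [Fintype V]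

lemma weight_mono_move {w : V → ℕ} (hw : ∀ a b, G.Adj a b → w b ≤ 2 * w a)
    {p p' : V → ℕ} (h : IsRubblingMove G p p') :
    ∑ z, p' z * w z ≤ ∑ z, p z * w z := by
  classical
  rcases h with ⟨v, u, hadj, h2, hv, hu, hz⟩ | ⟨a, b, u, hab, hadja, hadjb, h1a, h1b, ha', hb', hu', hz⟩
  · have hvu : v ≠ u := hadj.ne
    have key : ∀ z, p' z * w z + (if z = v then 2 * w v else 0)
        = p z * w z + (if z = u then w u else 0) := by
      intro z
      rcases eq_or_ne z v with rfl | h1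
      · rw [if_pos rfl, if_neg hvu, add_zero, hv]
        nlinarith [Nat.sub_add_cancel h2]
      · rcases eq_or_ne z u with rfl | h2'
        · rw [if_neg h1, if_pos rfl, hu]
          ring
        · rw [if_neg h1, if_neg h2', hz z h1 h2']
    have hsum : (∑ z, p' z * w z) + 2 * w v = (∑ z, p z * w z) + w u := by
      have := Finset.sum_congr rfl (fun z (_ : z ∈ Finset.univ) => key z)
      simpa [Finset.sum_add_distrib, Finset.sum_ite_eq' Finset.univ] using this
    have hwu : w u ≤ 2 * w v := hw v u hadj
    omega
  · have hau : a ≠ u := hadja.ne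
    have hbu : b ≠ u := hadjb.ne
    have key : ∀ z, p' z * w z + ((if z = a then w a else 0) + (if z = b then w b else 0))
        = p z * w z + (if z = u then w u else 0) := by
      intro z
      rcases eq_or_ne z a with rfl | h1
      · rw [if_pos rfl, if_neg hab, if_neg hau, add_zero, add_zero, ha']
        nlinarith [Nat.sub_add_cancel h1a]
      · rcases eq_or_ne z b with rfl | h2'
        · rw [if_neg h1, if_pos rfl, if_neg hbu, zero_add, add_zero, hb']
          nlinarith [Nat.sub_add_cancel h1b]
        · rcases eq_or_ne z u with rfl | h3
          · rw [if_neg h1, if_neg h2', if_pos rfl, hu']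
            ring
          · rw [if_neg h1, if_neg h2', if_neg h3, hz z h1 h2' h3]
    have hsum : (∑ z, p' z * w z) + (w a + w b) = (∑ z, p z * w z) + w u := by
      have := Finset.sum_congr rfl (fun z (_ : z ∈ Finset.univ) => key z)
      simpa [Finset.sum_add_distrib, Finset.sum_ite_eq' Finset.univ] using this
    have hwa : w u ≤ 2 * w a := hw a u hadja
    have hwb : w u ≤ 2 * w b := hw b u hadjb
    omega

lemma weight_mono_reach {w : V → ℕ} (hw : ∀ a b, G.Adj a b → w b ≤ 2 * w a)
    {p q : V → ℕ} (h : Relation.ReflTransGen (IsRubblingMove G) p q) :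
    ∑ z, q z * w z ≤ ∑ z, p z * w z := by
  induction h with
  | refl => exact le_rfl
  | tail _ hbc ih => exact le_trans (weight_mono_move hw hbc) ih

end Weight

section Reach

variable {G : SimpleGraph V}

lemma move_many [DecidableEq V] {a u : V} (h : G.Adj a u) (p : V → ℕ) :
    ∀ n : ℕ, 2 * n ≤ p a →
    Relation.ReflTransGen (IsRubblingMove G)
      p (fun z => if z = a then p a - 2 * n else if z = u then p u + n else p z) := by
  classical
  have hau : a ≠ u := h.ne
  intro n
  induction n with
  | zero =>
    intro _
    have he : (fun z => if z = a then p a - 2 * 0 else if z = u then p u + 0 else p z) = p := by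
      funext z
      split_ifs with h1 h2
      · subst h1; omega
      · subst h2; omega
      · rfl
    rw [he]
  | succ n ih =>
    intro hp
    refine (ih (by omega)).tail (Or.inl ⟨a, u, h, ?_, ?_, ?_, ?_⟩)
    · simp only [↓reduceIte]
      omega
    · simp only [↓reduceIte]
      omega
    · simp only [if_neg h.ne', ↓reduceIte]
      omega
    · intro z h1 h2
      simp only [if_neg h1, if_neg h2]

lemma reach_of_pow {d : ℕ} (k : ℕ) :
    ∀ (p : (Fin d → Fin (2 ^ d)) → ℕ) (a x : Fin d → Fin (2 ^ d)),
    2 ^ k ≤ p a → hammingDist a x ≤ k → RubblingReachable (hammingGraph d) p x := by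
  induction k with
  | zero =>
    intro p a x hp hdd
    obtain rfl := eq_of_hammingDist_eq_zero (Nat.le_zero.mp hdd)
    exact ⟨p, Relation.ReflTransGen.refl, le_trans (by norm_num) hp⟩
  | succ k ih =>
    intro p a x hp hdd
    by_cases hax : a = x
    · subst hax
      exact ⟨p, Relation.ReflTransGen.refl, le_trans Nat.one_le_two_pow hp⟩
    · obtain ⟨i, hi⟩ : ∃ i, a i ≠ x i := by
        by_contra hc; push_neg at hc; exact hax (funext hc)
      have hadj : (hammingGraph d).Adj a (Function.update a i (x i)) := hg_adj_update hi
      have hpow : 2 * 2 ^ k ≤ p a := by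
        have h : 2 ^ (k + 1) = 2 * 2 ^ k := by ring
        omega
      have hne : Function.update a i (x i) ≠ a := hadj.ne'
      set q : (Fin d → Fin (2 ^ d)) → ℕ := fun z => if z = a then p a - 2 * 2 ^ k
        else if z = Function.update a i (x i) then p (Function.update a i (x i)) + 2 ^ k
        else p z with hqdef
      have hstep : Relation.ReflTransGen (IsRubblingMove (hammingGraph d)) p q :=
        move_many hadj p (2 ^ k) hpow
      have hqu : 2 ^ k ≤ q (Function.update a i (x i)) := by
        rw [hqdef]
        simp [hne]
      have h5 : hammingDist (Function.update a i (x i)) x + 1 ≤ hammingDist a x :=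
        hg_hd_update hi
      obtain ⟨r, hr, hrx⟩ := ih q (Function.update a i (x i)) x hqu (by omega)
      exact ⟨r, hstep.trans hr, hrx⟩

end Reach

/-- For every `d ≥ 1` there is a connected graph of diameter `d` whose optimal
rubbling number is exactly `2^d`: namely the graph of `d`-tuples with entries in
`{1, …, 2^d}`, adjacent iff they agree in all but one coordinate. -/
theorem hammingGraph_diam_and_optimalRubblingNumber (d : ℕ) (hd : 1 ≤ d) :
    (hammingGraph d).Connected ∧ (hammingGraph d).diam = d ∧
    optimalRubblingNumber (hammingGraph d) = 2 ^ d := by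
  classical
  refine ⟨hg_connected, hg_diam hd, ?_⟩
  set S := {m | ∃ p : (Fin d → Fin (2 ^ d)) → ℕ, ∑ v, p v = m ∧
      ∀ x, RubblingReachable (hammingGraph d) p x} with hS
  -- membership: 2^d pebbles on a single vertex
  set v0 : Fin d → Fin (2 ^ d) := fun _ => ⟨0, by positivity⟩ with hv0
  have hmem : (2 ^ d) ∈ S := by
    refine ⟨fun v => if v = v0 then 2 ^ d else 0, ?_, ?_⟩
    · simp [Finset.sum_ite_eq' Finset.univ]
    · intro x
      refine reach_of_pow d (fun v => if v = v0 then 2 ^ d else 0) v0 x (by simp) (hg_hd_le v0 x)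
  -- lower bound
  have hlb : ∀ m ∈ S, 2 ^ d ≤ m := by
    rintro m ⟨p, hsum, hreach⟩
    by_contra hlt
    push_neg at hlt
    -- the support of p
    set supp := Finset.univ.filter fun v => p v ≠ 0 with hsupp
    have hcard : supp.card ≤ m := by
      calc supp.card = ∑ _v ∈ supp, 1 := by simp
        _ ≤ ∑ v ∈ supp, p v := Finset.sum_le_sum fun v hv => by
            simp only [hsupp, mem_filter] at hv; omega
        _ ≤ ∑ v, p v := Finset.sum_le_sum_of_subset (Finset.subset_univ _)
        _ = m := hsum
    -- choose a coordinate value avoiding all supported vertices, in each coordinate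
    have hchoose : ∀ i : Fin d, ∃ c : Fin (2 ^ d), ∀ v ∈ supp, v i ≠ c := by
      intro i
      have himg : (supp.image fun v => v i).card < Fintype.card (Fin (2 ^ d)) := by
        calc (supp.image fun v => v i).card ≤ supp.card := Finset.card_image_le
          _ ≤ m := hcard
          _ < 2 ^ d := hlt
          _ = Fintype.card (Fin (2 ^ d)) := (Fintype.card_fin _).symm
      have hpos : 0 < (supp.image fun v => v i)ᶜ.card := by
        rw [Finset.card_compl]
        exact Nat.sub_pos_of_lt himg
      obtain ⟨c, hc⟩ := Finset.card_pos.mp hpos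
      rw [Finset.mem_compl] at hc
      refine ⟨c, fun v hv hvc => hc ?_⟩
      exact Finset.mem_image.mpr ⟨v, hv, hvc⟩
    choose x hx using hchoose
    -- every supported vertex is at hamming distance d from x
    have hfar : ∀ v, p v ≠ 0 → hammingDist v x = d := by
      intro v hv
      have hvs : v ∈ supp := by simp [hsupp, hv]
      have : (Finset.univ.filter fun j : Fin d => v j ≠ x j) = Finset.univ :=
        Finset.filter_true_of_mem fun j _ => hx j v hvs
      simp [hammingDist, this]
    -- weight argument
    set w : (Fin d → Fin (2 ^ d)) → ℕ := fun v => 2 ^ (d - hammingDist v x) with hwdef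
    have hw : ∀ a b, (hammingGraph d).Adj a b → w b ≤ 2 * w a := by
      intro a b hadj
      have h1 : hammingDist a x ≤ hammingDist a b + hammingDist b x := hammingDist_triangle _ _ _
      have h2 : hammingDist a b ≤ 1 := hg_adj_hd hadj
      have h3 : d - hammingDist b x ≤ (d - hammingDist a x) + 1 := by
        have := hg_hd_le a x
        omega
      calc w b = 2 ^ (d - hammingDist b x) := rfl
        _ ≤ 2 ^ ((d - hammingDist a x) + 1) := Nat.pow_le_pow_right (by norm_num) h3
        _ = 2 * 2 ^ (d - hammingDist a x) := by ring
        _ = 2 * w a := rfl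
    obtain ⟨q, hsteps, hq⟩ := hreach x
    have hWq : 2 ^ d ≤ ∑ z, q z * w z := by
      calc 2 ^ d = 1 * w x := by simp [hwdef, hammingDist_self]
        _ ≤ q x * w x := Nat.mul_le_mul_right _ hq
        _ ≤ ∑ z, q z * w z :=
          Finset.single_le_sum (f := fun z => q z * w z) (fun z _ => Nat.zero_le _)
            (Finset.mem_univ x)
    have hWp : (∑ z, p z * w z) = m := by
      rw [← hsum]
      refine Finset.sum_congr rfl fun z _ => ?_
      by_cases hz : p z = 0
      · simp [hz]
      · simp [hwdef, hfar z hz]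
    have := weight_mono_reach hw hsteps
    omega
  have hne : S.Nonempty := ⟨_, hmem⟩
  refine le_antisymm (Nat.sInf_le hmem) (hlb _ (Nat.sInf_mem hne))
end
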